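/- arXiv:1509.06543 — 8 statements merged into one kernel-verified Lean document; each statement's English description precedes it below -/
import Mathlib

section
/- Let U and V be unitary operators on ℂ^n ⊗ ℂ^k. The following are equivalent: (1) for every density matrix β ∈ M_k^{1,+}(ℂ) and every density matrix ρ ∈ M_n^{1,+}(ℂ), L_{U,β}(ρ) = L_{V,β}(ρ); (2) there exists a unitary operator W on ℂ^k such that U = (I_n ⊗ W) V. -/
open Matrix Kronecker ComplexOrder

noncomputable section

namespace BipartiteUnitary

/-- A square complex matrix is unitary. -/
def IsUnitary {m : Type*} [Fintype m] [DecidableEq m] (U : Matrix m m ℂ) : Prop :=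
  U * Uᴴ = 1 ∧ Uᴴ * U = 1

/-- A density matrix: positive semidefinite with unit trace. -/
def IsDensity {m : Type*} [Fintype m] (β : Matrix m m ℂ) : Prop :=
  β.PosSemidef ∧ β.trace = 1

/-- Partial trace over the second tensor factor. -/
def trB {n k : Type*} [Fintype k] (M : Matrix (n × k) (n × k) ℂ) : Matrix n n ℂ :=
  fun i j => ∑ s, M (i, s) (j, s)

/-- Partial trace over the first tensor factor. -/
def trA {n k : Type*} [Fintype n] (M : Matrix (n × k) (n × k) ℂ) : Matrix k k ℂ :=
  fun s t => ∑ i, M (i, s) (i, t)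

/-- The quantum channel `L_{U,β}(X) = Tr_B (U (X ⊗ β) U*)`. -/
def channel {n k : Type*} [Fintype n] [Fintype k]
    (U : Matrix (n × k) (n × k) ℂ) (β : Matrix k k ℂ) (X : Matrix n n ℂ) :
    Matrix n n ℂ :=
  trB (U * (X ⊗ₖ β) * Uᴴ)

/-- The partial transpose `X^Γ = (id ⊗ t)(X)` with respect to the second factor. -/
def pt {n k : Type*} (U : Matrix (n × k) (n × k) ℂ) : Matrix (n × k) (n × k) ℂ :=
  fun p q => U (p.1, q.2) (q.1, p.2)

/-- A family of vectors forming an orthonormal basis of `ℂ^k`. -/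
def ONB {k : Type*} [Fintype k] [DecidableEq k] (e : k → k → ℂ) : Prop :=
  ∀ i j, (∑ s, star (e i s) * e j s) = if i = j then (1 : ℂ) else 0

/-- A partial isometry. -/
def IsPartialIso {m : Type*} [Fintype m] [DecidableEq m] (R : Matrix m m ℂ) : Prop :=
  R * Rᴴ * R = R

/-- Membership in `𝒰^A_{block-diag}`: `U = ∑ i, U_i ⊗ e_i f_i*` with `U_i` unitary
and `{e_i}, {f_i}` orthonormal bases of `ℂ^k`. -/
def memUA {n k : ℕ} (U : Matrix (Fin n × Fin k) (Fin n × Fin k) ℂ) : Prop :=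
  ∃ (Us : Fin k → Matrix (Fin n) (Fin n) ℂ) (e f : Fin k → Fin k → ℂ),
    (∀ i, IsUnitary (Us i)) ∧ ONB e ∧ ONB f ∧
    U = ∑ i, Us i ⊗ₖ vecMulVec (e i) (star (f i))

/-- Membership in `ℳ^A_{block-diag}`: `X = ∑ i, X_i ⊗ e_i f_i*` with arbitrary `X_i`. -/
def memMA {n k : ℕ} (X : Matrix (Fin n × Fin k) (Fin n × Fin k) ℂ) : Prop :=
  ∃ (Xs : Fin k → Matrix (Fin n) (Fin n) ℂ) (e f : Fin k → Fin k → ℂ),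
    ONB e ∧ ONB f ∧ X = ∑ i, Xs i ⊗ₖ vecMulVec (e i) (star (f i))

/-- Membership in `𝒰^B_{block-diag}`. -/
def memUB {n k : ℕ} (U : Matrix (Fin n × Fin k) (Fin n × Fin k) ℂ) : Prop :=
  ∃ (Us : Fin n → Matrix (Fin k) (Fin k) ℂ) (e f : Fin n → Fin n → ℂ),
    (∀ i, IsUnitary (Us i)) ∧ ONB e ∧ ONB f ∧
    U = ∑ i, vecMulVec (e i) (star (f i)) ⊗ₖ Us i

/-- Membership in `ℳ^B_{block-diag}`. -/
def memMB {n k : ℕ} (X : Matrix (Fin n × Fin k) (Fin n × Fin k) ℂ) : Prop :=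
  ∃ (Xs : Fin n → Matrix (Fin k) (Fin k) ℂ) (e f : Fin n → Fin n → ℂ),
    ONB e ∧ ONB f ∧ X = ∑ i, vecMulVec (e i) (star (f i)) ⊗ₖ Xs i

/-!
Density matrices span `M_m(ℂ)`: every matrix is a combination of positive ones, and a nonzero
positive matrix is a positive multiple of a density matrix. Hence the products `ρ ⊗ β` span
`M_{n×k}(ℂ)`, and equal channels force `Tr_B (U X U*) = Tr_B (V X V*)` for every `X`. Then
`M = U V*` satisfies `Tr_B (M Y M*) = Tr_B Y`; testing this on matrix units gives
`∑_s M_{(i,s),(a,t)} conj M_{(j,s),(b,u)} = δ_{ia} δ_{jb} δ_{tu}`, which kills the off-diagonal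
blocks of `M` and forces all its diagonal blocks to equal one unitary `W`, i.e. `M = 1 ⊗ W`.
-/

section Spanning

variable {m : Type*} [Fintype m]

theorem mem_span_isDensity_of_posSemidef {A : Matrix m m ℂ} (hA : A.PosSemidef) :
    A ∈ Submodule.span ℂ {β : Matrix m m ℂ | IsDensity β} := by
  rcases eq_or_ne A 0 with rfl | hA0
  · exact zero_mem _
  have htr : A.trace ≠ 0 := mt hA.trace_eq_zero_iff.mp hA0
  have hdens : IsDensity (A.trace⁻¹ • A) :=
    ⟨hA.smul (inv_nonneg.mpr hA.trace_nonneg), by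
      rw [trace_smul, smul_eq_mul, inv_mul_cancel₀ htr]⟩
  rw [← smul_inv_smul₀ htr A]
  exact Submodule.smul_mem _ _ (Submodule.subset_span hdens)

open scoped MatrixOrder Matrix.Norms.L2Operator in
theorem span_isDensity [DecidableEq m] :
    Submodule.span ℂ {β : Matrix m m ℂ | IsDensity β} = ⊤ := by
  rw [eq_top_iff, ← CStarAlgebra.span_nonneg, Submodule.span_le]
  exact fun A hA => mem_span_isDensity_of_posSemidef (nonneg_iff_posSemidef.mp hA)

theorem span_kronecker_eq_top {R l n : Type*} [CommRing R] [Fintype l] [DecidableEq l]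
    [Fintype n] [DecidableEq n] :
    Submodule.span R (Set.image2 (· ⊗ₖ ·) (Set.univ : Set (Matrix l l R))
      (Set.univ : Set (Matrix n n R))) = ⊤ := by
  rw [eq_top_iff, ← (stdBasis R (l × n) (l × n)).span_eq]
  refine Submodule.span_mono ?_
  rintro _ ⟨⟨⟨a, t⟩, ⟨b, u⟩⟩, rfl⟩
  exact ⟨single a b 1, trivial, single t u 1, trivial, by
    dsimp only
    rw [stdBasis_eq_single, single_kronecker_single, mul_one]⟩

variable {n k : Type*} [Fintype n] [DecidableEq n] [Fintype k] [DecidableEq k]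

theorem span_kronecker_isDensity :
    Submodule.span ℂ (Set.image2 (· ⊗ₖ ·) {ρ : Matrix n n ℂ | IsDensity ρ}
      {β : Matrix k k ℂ | IsDensity β}) = ⊤ := by
  have := Submodule.map₂_span_span ℂ (kroneckerBilinear (R := ℂ) (α := ℂ) (l := n) (m := n)
    (n := k) (p := k)) {ρ | IsDensity ρ} {β | IsDensity β}
  rw [span_isDensity, span_isDensity, ← Submodule.span_univ, ← Submodule.span_univ,
    Submodule.map₂_span_span] at this
  exact this.symm.trans span_kronecker_eq_top

end Spanning

section PartialTrace

variable {n k : Type*} [Fintype n] [DecidableEq n] [Fintype k]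

def trBLinearMap : Matrix (n × k) (n × k) ℂ →ₗ[ℂ] Matrix n n ℂ where
  toFun := trB
  map_add' M N := by ext i j; simp [trB, Finset.sum_add_distrib]
  map_smul' c M := by ext i j; simp [trB, Finset.mul_sum]

theorem trB_one_kronecker_mul (A : Matrix k k ℂ) (M : Matrix (n × k) (n × k) ℂ) :
    trB ((1 ⊗ₖ A) * M) = trB (M * (1 ⊗ₖ A)) := by
  ext i j
  simp only [trB, mul_apply, kroneckerMap_apply, one_apply, ite_mul, one_mul, zero_mul,
    Fintype.sum_prod_type, Finset.sum_ite_irrel, Finset.sum_const_zero, Finset.sum_ite_eq,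
    Finset.mem_univ, ↓reduceIte, mul_ite, mul_zero, Finset.sum_ite_eq']
  rw [Finset.sum_comm]
  simp only [mul_comm]

theorem trB_one_kronecker_conj [DecidableEq k] {W : Matrix k k ℂ} (hW : Wᴴ * W = 1)
    (M : Matrix (n × k) (n × k) ℂ) : trB ((1 ⊗ₖ W) * M * (1 ⊗ₖ W)ᴴ) = trB M := by
  rw [Matrix.mul_assoc, trB_one_kronecker_mul, conjTranspose_kronecker (1 : Matrix n n ℂ),
    conjTranspose_one, Matrix.mul_assoc, ← mul_kronecker_mul, Matrix.one_mul, hW,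
    one_kronecker_one, Matrix.mul_one]

theorem trB_conj_eq_of_channel_eq [DecidableEq k] {U V : Matrix (n × k) (n × k) ℂ}
    (h : ∀ β : Matrix k k ℂ, IsDensity β → ∀ ρ : Matrix n n ℂ, IsDensity ρ →
      channel U β ρ = channel V β ρ) (X : Matrix (n × k) (n × k) ℂ) :
    trB (U * X * Uᴴ) = trB (V * X * Vᴴ) := by
  let conjTrB (U : Matrix (n × k) (n × k) ℂ) :=
    trBLinearMap ∘ₗ LinearMap.mulRight ℂ Uᴴ ∘ₗ LinearMap.mulLeft ℂ U
  have hext : conjTrB U = conjTrB V := by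
    refine LinearMap.ext_on span_kronecker_isDensity ?_
    rintro _ ⟨ρ, hρ, β, hβ, rfl⟩
    exact h β hβ ρ hρ
  exact LinearMap.congr_fun hext X

end PartialTrace

section PreservesTrB

variable {n k : Type*} [Fintype n] [DecidableEq n] [Fintype k] [DecidableEq k]

def PreservesTrB (M : Matrix (n × k) (n × k) ℂ) : Prop :=
  ∀ Y, trB (M * Y * Mᴴ) = trB Y

def diagBlock (M : Matrix (n × k) (n × k) ℂ) (i : n) : Matrix k k ℂ :=
  M.submatrix (Prod.mk i) (Prod.mk i)

namespace PreservesTrB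

variable {M : Matrix (n × k) (n × k) ℂ} (h : PreservesTrB M)
include h

theorem sum_mul_star (i j a b : n) (t u : k) :
    ∑ s, M (i, s) (a, t) * star (M (j, s) (b, u)) =
      if i = a ∧ j = b ∧ t = u then 1 else 0 := by
  have H := congrFun (congrFun (h (single (a, t) (b, u) 1)) i) j
  simp only [trB, mul_apply, conjTranspose_apply, single, of_apply,
    mul_ite, mul_zero, mul_one, ite_mul, zero_mul, ite_and,
    Finset.sum_ite_irrel, Finset.sum_const_zero, Finset.sum_ite_eq,
    Finset.mem_univ, if_true, Prod.mk.injEq] at H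
  rw [H]
  split_ifs <;> tauto

theorem apply_eq_zero_of_ne {i a : n} (hia : i ≠ a) (s t : k) : M (i, s) (a, t) = 0 := by
  have hsum := h.sum_mul_star i i a a t t
  rw [if_neg (by tauto)] at hsum
  exact CStarRing.mul_star_self_eq_zero_iff _ |>.mp <|
    (Finset.sum_eq_zero_iff_of_nonneg fun s _ => mul_star_self_nonneg _).mp hsum s
      (Finset.mem_univ s)

theorem conjTranspose_diagBlock_mul_diagBlock (i j : n) :
    (diagBlock M j)ᴴ * diagBlock M i = 1 := by
  ext u t
  have := h.sum_mul_star i j i j t u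
  simp only [true_and, eq_comm (a := t)] at this
  rw [mul_apply, one_apply, ← this]
  exact Finset.sum_congr rfl fun s _ => mul_comm _ _

theorem eq_one_kronecker_diagBlock (i₀ : n) : M = 1 ⊗ₖ diagBlock M i₀ := by
  set W := diagBlock M i₀
  have hblock (i : n) : diagBlock M i = W :=
    calc diagBlock M i
        = W * (Wᴴ * diagBlock M i) := by
          rw [← Matrix.mul_assoc,
            mul_eq_one_comm.mp (h.conjTranspose_diagBlock_mul_diagBlock i₀ i₀), Matrix.one_mul]
      _ = W := by rw [h.conjTranspose_diagBlock_mul_diagBlock i i₀, Matrix.mul_one]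
  ext ⟨i, s⟩ ⟨a, t⟩
  rw [kronecker_apply, one_apply]
  split_ifs with hia
  · subst hia
    rw [one_mul, ← hblock i, diagBlock, submatrix_apply]
  · rw [zero_mul, h.apply_eq_zero_of_ne hia]

end PreservesTrB

end PreservesTrB

theorem stmt0_general (n k : ℕ) (hn : 0 < n)
    (U V : Matrix (Fin n × Fin k) (Fin n × Fin k) ℂ)
    (hV : IsUnitary V) :
    (∀ β : Matrix (Fin k) (Fin k) ℂ, IsDensity β →
      ∀ ρ : Matrix (Fin n) (Fin n) ℂ, IsDensity ρ → channel U β ρ = channel V β ρ)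
    ↔ ∃ W : Matrix (Fin k) (Fin k) ℂ, IsUnitary W ∧
        U = ((1 : Matrix (Fin n) (Fin n) ℂ) ⊗ₖ W) * V := by
  constructor
  · intro h
    have hM : PreservesTrB (U * Vᴴ) := fun Y => by
      simpa only [conjTranspose_mul, conjTranspose_conjTranspose, Matrix.mul_assoc, hV.1,
        ← Matrix.mul_assoc V, Matrix.one_mul, Matrix.mul_one]
        using trB_conj_eq_of_channel_eq h (Vᴴ * Y * V)
    have hW := hM.conjTranspose_diagBlock_mul_diagBlock ⟨0, hn⟩ ⟨0, hn⟩
    refine ⟨_, ⟨mul_eq_one_comm.mp hW, hW⟩, ?_⟩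
    rw [← hM.eq_one_kronecker_diagBlock, Matrix.mul_assoc, hV.2, Matrix.mul_one]
  · rintro ⟨W, hW, rfl⟩ β - ρ -
    rw [channel, channel, ← trB_one_kronecker_conj hW.2 (V * (ρ ⊗ₖ β) * Vᴴ)]
    simp only [conjTranspose_mul, Matrix.mul_assoc]

/-- two bipartite unitaries induce the same channel for every ancilla
state iff they differ by a unitary acting on the ancilla. -/
theorem stmt0 (n k : ℕ) (hn : 0 < n) (hk : 0 < k)
    (U V : Matrix (Fin n × Fin k) (Fin n × Fin k) ℂ)
    (hU : IsUnitary U) (hV : IsUnitary V) :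
    (∀ β : Matrix (Fin k) (Fin k) ℂ, IsDensity β →
      ∀ ρ : Matrix (Fin n) (Fin n) ℂ, IsDensity ρ → channel U β ρ = channel V β ρ)
    ↔ ∃ W : Matrix (Fin k) (Fin k) ℂ, IsUnitary W ∧
        U = ((1 : Matrix (Fin n) (Fin n) ℂ) ⊗ₖ W) * V :=
  stmt0_general n k hn U V hV

end BipartiteUnitary
end
end

section
/- Let U be a unitary operator on ℂ^n ⊗ ℂ^k such that for every density matrix β ∈ M_k^{1,+}(ℂ) there exists a unitary V_β on ℂ^n with L_{U,β}(ρ) = V_β ρ V_β* for all density matrices ρ ∈ M_n^{1,+}(ℂ). Then there exist unitaries V on ℂ^n and W on ℂ^k such that U = V ⊗ W. Conversely, every product unitary V ⊗ W has this property; hence U_aut = {V ⊗ W : V ∈ U_n, W ∈ U_k}. -/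
open Matrix Kronecker ComplexOrder

noncomputable section

namespace BipartiteUnitary

/-!
For the maximally mixed ancilla, `L_{U,𝟙/k}(X) = k⁻¹ ∑_{s,t} U_{st} X U_{st}ᴴ`, where the `U_{st}`
are the `n × n` blocks of `U`. If this channel is `X ↦ V X Vᴴ`, the operators `K_{st} = Vᴴ U_{st}`
satisfy `∑ K_{st} x xᴴ K_{st}ᴴ = k x xᴴ` for every vector `x`. Pairing with a vector `y ⊥ x` gives
`∑ |⟨y, K_{st} x⟩|² = 0`, so each `K_{st}` maps every `x` into `ℂ x` and is a scalar `c_{st}`.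
Hence `U = V ⊗ (c_{st})`, and unitarity of `U` forces unitarity of `(c_{st})`. Conversely,
`Tr_B ((V ⊗ W) (X ⊗ β) (V ⊗ W)ᴴ) = Tr (W β Wᴴ) • V X Vᴴ = V X Vᴴ`.
-/

section Blocks

variable {n k : Type*}

def block (U : Matrix (n × k) (n × k) ℂ) (s t : k) : Matrix n n ℂ :=
  of fun i j => U (i, s) (j, t)

lemma eq_kronecker_of_block_eq_smul {U : Matrix (n × k) (n × k) ℂ} {V : Matrix n n ℂ}
    {c : k → k → ℂ} (h : ∀ s t, block U s t = c s t • V) : U = V ⊗ₖ of c := by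
  ext ⟨i, s⟩ ⟨j, t⟩
  have hij := congrFun (congrFun (h s t) i) j
  simp only [block, of_apply, Matrix.smul_apply, smul_eq_mul] at hij
  simp [hij, mul_comm]

lemma eq_one_of_one_kronecker_eq_one [DecidableEq n] [DecidableEq k] [Nonempty n]
    {D : Matrix k k ℂ} (h : (1 : Matrix n n ℂ) ⊗ₖ D = 1) : D = 1 := by
  obtain ⟨i⟩ := ‹Nonempty n›
  ext s t
  simpa [one_apply] using congrFun (congrFun h (i, s)) (i, t)

lemma isUnitary_of_isUnitary_kronecker [Fintype n] [Fintype k] [DecidableEq n] [DecidableEq k]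
    [Nonempty n] {V : Matrix n n ℂ} {W : Matrix k k ℂ} (hV : IsUnitary V)
    (h : IsUnitary (V ⊗ₖ W)) : IsUnitary W := by
  obtain ⟨h₁, h₂⟩ := h
  rw [conjTranspose_kronecker, ← mul_kronecker_mul] at h₁ h₂
  rw [hV.1] at h₁
  rw [hV.2] at h₂
  exact ⟨eq_one_of_one_kronecker_eq_one h₁, eq_one_of_one_kronecker_eq_one h₂⟩

lemma trB_kronecker [Fintype k] (A : Matrix n n ℂ) (B : Matrix k k ℂ) :
    trB (A ⊗ₖ B) = B.trace • A := by
  ext i j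
  simp [trB, kroneckerMap_apply, trace, Finset.mul_sum, mul_comm]

lemma trB_mul_kronecker_one_mul [Fintype n] [Fintype k] [DecidableEq k]
    (U : Matrix (n × k) (n × k) ℂ) (X : Matrix n n ℂ) :
    trB (U * (X ⊗ₖ 1) * Uᴴ) = ∑ s, ∑ t, block U s t * X * (block U s t)ᴴ := by
  ext i j
  simp only [trB, Matrix.sum_apply, block, Matrix.mul_apply, conjTranspose_apply,
    kroneckerMap_apply, of_apply, one_apply, Fintype.sum_prod_type, mul_ite, mul_one, mul_zero,
    Finset.sum_ite_eq', Finset.mem_univ, if_true, Finset.sum_mul]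
  exact Finset.sum_congr rfl fun s _ => Finset.sum_comm

end Blocks

section Channel

variable {n k : Type*} [Fintype n] [Fintype k]

lemma channel_kronecker (V X : Matrix n n ℂ) (W β : Matrix k k ℂ) :
    channel (V ⊗ₖ W) β X = (W * β * Wᴴ).trace • (V * X * Vᴴ) := by
  rw [channel, conjTranspose_kronecker, ← mul_kronecker_mul, ← mul_kronecker_mul, trB_kronecker]

lemma channel_kronecker_of_isUnitary [DecidableEq k] {W β : Matrix k k ℂ} (hW : IsUnitary W)
    (hβ : β.trace = 1) (V X : Matrix n n ℂ) : channel (V ⊗ₖ W) β X = V * X * Vᴴ := by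
  rw [channel_kronecker, trace_mul_cycle, hW.2, Matrix.one_mul, hβ, one_smul]

lemma channel_smul (U : Matrix (n × k) (n × k) ℂ) (β : Matrix k k ℂ) (a : ℂ)
    (X : Matrix n n ℂ) : channel U β (a • X) = a • channel U β X := by
  ext i j
  simp [channel, trB, smul_kronecker, Finset.mul_sum]

def maximallyMixed (k : Type*) [Fintype k] [DecidableEq k] : Matrix k k ℂ :=
  (Fintype.card k : ℂ)⁻¹ • 1

lemma channel_maximallyMixed [DecidableEq k] (U : Matrix (n × k) (n × k) ℂ) (X : Matrix n n ℂ) :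
    channel U (maximallyMixed k) X =
      (Fintype.card k : ℂ)⁻¹ • ∑ s, ∑ t, block U s t * X * (block U s t)ᴴ := by
  rw [channel, maximallyMixed, kronecker_smul, Matrix.mul_smul, Matrix.smul_mul,
    ← trB_mul_kronecker_one_mul]
  ext i j
  simp [trB, Finset.mul_sum]

end Channel

section Density

variable {m n : Type*} [Fintype n]

lemma isDensity_inv_trace_smul {P : Matrix n n ℂ} (hP : P.PosSemidef) (h : P.trace ≠ 0) :
    IsDensity (P.trace⁻¹ • P) :=
  ⟨hP.smul (inv_nonneg_of_nonneg hP.trace_nonneg),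
    by rw [trace_smul, smul_eq_mul, inv_mul_cancel₀ h]⟩

lemma isDensity_maximallyMixed [DecidableEq n] [Nonempty n] : IsDensity (maximallyMixed n) := by
  have h := isDensity_inv_trace_smul (PosSemidef.one (n := n)) (by simp)
  rwa [trace_one] at h

lemma eq_of_posSemidef_of_forall_isDensity {f g : Matrix n n ℂ → Matrix m m ℂ}
    (hf : ∀ (a : ℂ) X, f (a • X) = a • f X) (hg : ∀ (a : ℂ) X, g (a • X) = a • g X)
    (h : ∀ ρ, IsDensity ρ → f ρ = g ρ) {P : Matrix n n ℂ} (hP : P.PosSemidef) : f P = g P := by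
  by_cases htr : P.trace = 0
  · rw [hP.trace_eq_zero_iff.mp htr, ← zero_smul ℂ 0, hf, hg, zero_smul, zero_smul]
  · rw [← smul_inv_smul₀ htr P, hf, hg, h _ (isDensity_inv_trace_smul hP htr)]

end Density

section Scalar

variable {n : Type*} [Fintype n] [DecidableEq n]

lemma exists_eq_smul_one_of_forall_orthogonal {M : Matrix n n ℂ}
    (h : ∀ x y : n → ℂ, star y ⬝ᵥ x = 0 → star y ⬝ᵥ (M *ᵥ x) = 0) :
    ∃ c : ℂ, M = c • 1 := by
  have hentry : ∀ i j, star (Pi.single i 1 : n → ℂ) ⬝ᵥ (M *ᵥ Pi.single j 1) = M i j := by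
    simp [Pi.star_single, single_dotProduct, mulVec_single]
  have hoff : ∀ i j, i ≠ j → M i j = 0 := fun i j hij => by
    rw [← hentry]
    exact h _ _ (by simp [Pi.star_single, hij])
  have hdiag : ∀ i j, M i i = M j j := fun i j => by
    rcases eq_or_ne i j with rfl | hij
    · rfl
    have horth := h (Pi.single i 1 + Pi.single j 1) (Pi.single i 1 - Pi.single j 1)
      (by simp [Pi.star_single, hij, hij.symm])
    simp only [star_sub, mulVec_add, sub_dotProduct, dotProduct_add, hentry] at horth
    linear_combination horth - hoff i j hij + hoff j i hij.symm
  rcases isEmpty_or_nonempty n with _ | ⟨⟨i₀⟩⟩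
  · exact ⟨0, Subsingleton.elim _ _⟩
  refine ⟨M i₀ i₀, ext fun i j => ?_⟩
  rcases eq_or_ne i j with rfl | hij
  · simp [hdiag i i₀]
  · simp [hoff i j hij, hij]

lemma exists_eq_smul_one_of_sum_conj_vecMulVec {ι : Type*} [Fintype ι]
    (K : ι → Matrix n n ℂ) (a : ℂ)
    (h : ∀ x : n → ℂ, ∑ i, K i * vecMulVec x (star x) * (K i)ᴴ = a • vecMulVec x (star x))
    (i : ι) : ∃ c : ℂ, K i = c • 1 := by
  refine exists_eq_smul_one_of_forall_orthogonal fun x y hxy => ?_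
  have hquad : ∀ v : n → ℂ, star y ⬝ᵥ (vecMulVec v (star v) *ᵥ y) =
      star (star y ⬝ᵥ v) * (star y ⬝ᵥ v) := by
    intro v
    rw [vecMulVec_mulVec, op_smul_eq_smul, dotProduct_smul, smul_eq_mul, star_dotProduct]
  have hsum := congrArg (fun A => star y ⬝ᵥ (A *ᵥ y)) (h x)
  simp only [Matrix.sum_mulVec, dotProduct_sum, mul_vecMulVec, vecMulVec_mul, ← star_mulVec,
    smul_mulVec, dotProduct_smul, hquad, hxy, mul_zero, smul_zero] at hsum
  exact congrFun (dotProduct_star_self_eq_zero (v := fun j => star y ⬝ᵥ (K j *ᵥ x)) |>.mp hsum) i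

end Scalar

theorem exists_isUnitary_kronecker_of_channel_maximallyMixed {n k : Type*} [Fintype n]
    [Fintype k] [DecidableEq n] [DecidableEq k] [Nonempty n] [Nonempty k]
    {U : Matrix (n × k) (n × k) ℂ} (hU : IsUnitary U) {V : Matrix n n ℂ} (hV : IsUnitary V)
    (h : ∀ ρ, IsDensity ρ → channel U (maximallyMixed k) ρ = V * ρ * Vᴴ) :
    ∃ W : Matrix k k ℂ, IsUnitary W ∧ U = V ⊗ₖ W := by
  have hcard : (Fintype.card k : ℂ) ≠ 0 := by simp
  have hkraus : ∀ x : n → ℂ, ∑ p : k × k, (Vᴴ * block U p.1 p.2) * vecMulVec x (star x) *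
      (Vᴴ * block U p.1 p.2)ᴴ = (Fintype.card k : ℂ) • vecMulVec x (star x) := by
    intro x
    have hx := eq_of_posSemidef_of_forall_isDensity (channel_smul U _)
      (g := fun X => V * X * Vᴴ) (fun a X => by simp) h (posSemidef_vecMulVec_self_star x)
    rw [channel_maximallyMixed, inv_smul_eq_iff₀ hcard] at hx
    calc _ = Vᴴ * (∑ s, ∑ t, block U s t * vecMulVec x (star x) * (block U s t)ᴴ) * V := by
          simp only [Fintype.sum_prod_type, Matrix.mul_sum, Matrix.sum_mul, conjTranspose_mul,
            conjTranspose_conjTranspose, Matrix.mul_assoc]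
      _ = (Fintype.card k : ℂ) • vecMulVec x (star x) := by
          rw [hx, Matrix.mul_smul, Matrix.smul_mul, ← Matrix.mul_assoc, ← Matrix.mul_assoc, hV.2,
            Matrix.one_mul, Matrix.mul_assoc, hV.2, Matrix.mul_one]
  choose c hc using exists_eq_smul_one_of_sum_conj_vecMulVec _ _ hkraus
  have hblock : ∀ s t, block U s t = c (s, t) • V := fun s t => by
    rw [← Matrix.one_mul (block U s t), ← hV.1, Matrix.mul_assoc, hc (s, t), Matrix.mul_smul,
      Matrix.mul_one]
  have hUV := eq_kronecker_of_block_eq_smul hblock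
  exact ⟨_, isUnitary_of_isUnitary_kronecker hV (hUV ▸ hU), hUV⟩

/-- a bipartite unitary induces a unitary conjugation channel for every
ancilla state iff it is a tensor product of unitaries. -/
theorem stmt2 (n k : ℕ) (hn : 0 < n) (hk : 0 < k)
    (U : Matrix (Fin n × Fin k) (Fin n × Fin k) ℂ) (hU : IsUnitary U) :
    (∀ β : Matrix (Fin k) (Fin k) ℂ, IsDensity β →
      ∃ V : Matrix (Fin n) (Fin n) ℂ, IsUnitary V ∧
        ∀ ρ : Matrix (Fin n) (Fin n) ℂ, IsDensity ρ → channel U β ρ = V * ρ * Vᴴ)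
    ↔ ∃ (V : Matrix (Fin n) (Fin n) ℂ) (W : Matrix (Fin k) (Fin k) ℂ),
        IsUnitary V ∧ IsUnitary W ∧ U = V ⊗ₖ W := by
  constructor
  · intro h
    have : Nonempty (Fin n) := Fin.pos_iff_nonempty.mp hn
    have : Nonempty (Fin k) := Fin.pos_iff_nonempty.mp hk
    obtain ⟨V, hV, hVρ⟩ := h _ isDensity_maximallyMixed
    obtain ⟨W, hW, hUVW⟩ := exists_isUnitary_kronecker_of_channel_maximallyMixed hU hV hVρ
    exact ⟨V, W, hV, hW, hUVW⟩
  · rintro ⟨V, W, hV, hW, rfl⟩ β hβ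
    exact ⟨V, hV, fun ρ _ => channel_kronecker_of_isUnitary hW hβ.2 V ρ⟩

end BipartiteUnitary
end
end

section
/- If k is not an integer multiple of n (i.e. k ≠ rn for every positive integer r), then there exists no unitary operator U on ℂ^n ⊗ ℂ^k such that for every density matrix β ∈ M_k^{1,+}(ℂ) the channel L_{U,β} is constant, i.e. L_{U,β}(ρ) = L_{U,β}(σ) for all density matrices ρ, σ ∈ M_n^{1,+}(ℂ). -/
/-!
Fix a density matrix `β`. Then `X ↦ L_{U,β}(X)` is linear and constant on density matrices,
so it kills the trace-zero matrix units `E_ij` (`i ≠ j`); as density matrices span `M_k`,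
linearity in `β` then gives `Tr_B (U (E_ij ⊗ E_tt') U*) = 0`. In coordinates, the subspaces
`S_i ⊆ ℂ^k` spanned by the vectors `s ↦ U_{(a,s),(i,t)}` are pairwise orthogonal, so
`∑ᵢ dim S_i ≤ k`. On the other hand the `k` linearly independent columns `(i,t)` of `U` lie in
`S_iⁿ`, so `k ≤ n dim S_i` for every `i`. Hence `k = n dim S_i`.
-/

open Matrix Kronecker ComplexOrder

noncomputable section

namespace BipartiteUnitary

lemma vecMulVec_polarization {m : Type*} (x y : m → ℂ) :
    (4 : ℂ) • vecMulVec x (star y) =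
      vecMulVec (x + y) (star (x + y)) - vecMulVec (x - y) (star (x - y)) +
        Complex.I • (vecMulVec (x + Complex.I • y) (star (x + Complex.I • y)) -
          vecMulVec (x - Complex.I • y) (star (x - Complex.I • y))) := by
  ext a b
  simp only [Matrix.smul_apply, Matrix.sub_apply, Matrix.add_apply, vecMulVec_apply,
    Pi.add_apply, Pi.sub_apply, Pi.smul_apply, Pi.star_apply, smul_eq_mul,
    Complex.star_def, map_add, map_sub, map_mul, Complex.conj_I]
  linear_combination
    (2 * x a * (starRingEnd ℂ) (y b) - 2 * y a * (starRingEnd ℂ) (x b)) * Complex.I_sq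

section DensitySpan

variable {m : Type*} [Fintype m] {M : Type*} [AddCommGroup M] [Module ℂ M]

lemma map_posSemidef_eq_zero (f : Matrix m m ℂ →ₗ[ℂ] M) (hf : ∀ ρ, IsDensity ρ → f ρ = 0)
    {A : Matrix m m ℂ} (hA : A.PosSemidef) : f A = 0 := by
  by_cases htr : A.trace = 0
  · rw [hA.trace_eq_zero_iff.mp htr, map_zero]
  · have hρ : IsDensity (A.trace⁻¹ • A) :=
      ⟨hA.smul (inv_nonneg_of_nonneg hA.trace_nonneg), by
        rw [trace_smul, smul_eq_mul, inv_mul_cancel₀ htr]⟩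
    simpa [htr] using hf _ hρ

theorem eq_zero_of_map_isDensity [DecidableEq m] (f : Matrix m m ℂ →ₗ[ℂ] M)
    (hf : ∀ ρ, IsDensity ρ → f ρ = 0) : f = 0 := by
  have hrank1 : ∀ x y : m → ℂ, f (vecMulVec x (star y)) = 0 := by
    intro x y
    have h4 := congrArg f (vecMulVec_polarization x y)
    simp only [map_add, map_sub, map_smul, map_posSemidef_eq_zero f hf
      (posSemidef_vecMulVec_self_star _), sub_zero, smul_zero, add_zero] at h4
    exact (smul_eq_zero.mp h4).resolve_left four_ne_zero
  ext1 A
  rw [LinearMap.zero_apply]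
  induction A using Matrix.induction_on' with
  | h_zero => simp
  | h_add A B hA hB => simp [hA, hB]
  | h_std_basis i j c =>
    have hsingle : single i j c = c • vecMulVec (Pi.single i 1) (star (Pi.single j 1)) := by
      rw [Pi.star_single, star_one, ← single_eq_single_vecMulVec_single, smul_single, smul_eq_mul,
        mul_one]
    rw [hsingle, map_smul, hrank1, smul_zero]

theorem map_single_eq_zero_of_const [DecidableEq m] (f : Matrix m m ℂ →ₗ[ℂ] M)
    (hf : ∀ ρ σ, IsDensity ρ → IsDensity σ → f ρ = f σ) {i j : m} (hij : i ≠ j) :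
    f (single i j 1) = 0 := by
  have hρ : IsDensity (single i i 1 : Matrix m m ℂ) := by
    refine ⟨?_, by simp⟩
    simpa [single_eq_single_vecMulVec_single, Pi.star_single] using
      posSemidef_vecMulVec_self_star (Pi.single i (1 : ℂ))
  have := eq_zero_of_map_isDensity (f - (traceLinearMap m ℂ ℂ).smulRight (f (single i i 1)))
    (fun ρ hρ' => by simp [hρ'.2, hf ρ _ hρ' hρ])
  simpa [hij] using LinearMap.congr_fun this (single i j 1)

end DensitySpan

section Channel

variable {n k : Type*} [Fintype n] [Fintype k]

def channelBilin (U : Matrix (n × k) (n × k) ℂ) :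
    Matrix n n ℂ →ₗ[ℂ] Matrix k k ℂ →ₗ[ℂ] Matrix n n ℂ :=
  LinearMap.mk₂ ℂ (fun X β => channel U β X)
    (fun X Y β => by
      ext; simp [channel, trB, add_kronecker, mul_add, add_mul, Finset.sum_add_distrib])
    (fun c X β => by ext; simp [channel, trB, smul_kronecker, Finset.mul_sum])
    (fun X β γ => by
      ext; simp [channel, trB, kronecker_add, mul_add, add_mul, Finset.sum_add_distrib])
    (fun c X β => by ext; simp [channel, trB, kronecker_smul, Finset.mul_sum])

lemma channel_single_single [DecidableEq n] [DecidableEq k] (U : Matrix (n × k) (n × k) ℂ)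
    (i j : n) (t t' : k) (a b : n) :
    channel U (single t t' 1) (single i j 1) a b =
      ∑ s, U (a, s) (i, t) * star (U (b, s) (j, t')) := by
  simp [channel, trB, single_kronecker_single, mul_apply, single_apply, ite_and]

end Channel

section Dimension

open Module

theorem sum_finrank_le_of_pairwise_isOrtho {𝕜 E ι : Type*} [RCLike 𝕜] [NormedAddCommGroup E]
    [InnerProductSpace 𝕜 E] [FiniteDimensional 𝕜 E] [Fintype ι] {V : ι → Submodule 𝕜 E}
    (hV : Pairwise fun i j => V i ⟂ V j) :
    ∑ i, finrank 𝕜 (V i) ≤ finrank 𝕜 E := by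
  have hON := (orthogonalFamily_iff_pairwise.mpr hV).orthonormal_sigma_orthonormal
    fun i => (stdOrthonormalBasis 𝕜 (V i)).orthonormal
  simpa using hON.linearIndependent.fintype_card_le_finrank

theorem card_le_card_mul_finrank_of_linearIndependent {R E ι κ : Type*} [Field R]
    [AddCommGroup E] [Module R E] [Fintype ι] [Fintype κ] (S : Submodule R E)
    [FiniteDimensional R S] (v : κ → ι → E) (hv : LinearIndependent R v)
    (hvS : ∀ t a, v t a ∈ S) :
    Fintype.card κ ≤ Fintype.card ι * finrank R S := by
  let v' : κ → ι → S := fun t a => ⟨v t a, hvS t a⟩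
  have hv' : LinearIndependent R v' := hv.of_comp (S.subtype.compLeft ι)
  simpa [Module.finrank_pi_fintype] using hv'.fintype_card_le_finrank

theorem card_dvd_card_of_orthogonal_blocks {ι κ : Type*} [Fintype ι] [Fintype κ] [Nonempty ι]
    (U : Matrix (ι × κ) (ι × κ) ℂ) (hU : LinearIndependent ℂ U.col)
    (horth : ∀ i j, i ≠ j → ∀ a b t t', ∑ s, U (a, s) (i, t) * star (U (b, s) (j, t')) = 0) :
    Fintype.card ι ∣ Fintype.card κ := by
  let w : ι → ι × κ → EuclideanSpace ℂ κ := fun i p => WithLp.toLp 2 fun s => U (p.1, s) (i, p.2)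
  let S : ι → Submodule ℂ (EuclideanSpace ℂ κ) := fun i => Submodule.span ℂ (Set.range (w i))
  have hS : Pairwise fun i j => S i ⟂ S j := by
    intro i j hij
    rw [Submodule.isOrtho_span]
    rintro _ ⟨⟨a, t⟩, rfl⟩ _ ⟨⟨b, t'⟩, rfl⟩
    simpa [PiLp.inner_apply, mul_comm] using horth j i hij.symm b a t' t
  have hsum : ∑ i, finrank ℂ (S i) ≤ Fintype.card κ := by
    simpa using sum_finrank_le_of_pairwise_isOrtho hS
  have hlow : ∀ i, Fintype.card κ ≤ Fintype.card ι * finrank ℂ (S i) := by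
    intro i
    let reshape : (ι × κ → ℂ) ≃ₗ[ℂ] ι → EuclideanSpace ℂ κ :=
      (LinearEquiv.curry ℂ ℂ ι κ).trans
        (LinearEquiv.piCongrRight fun _ => (WithLp.linearEquiv 2 ℂ (κ → ℂ)).symm)
    refine card_le_card_mul_finrank_of_linearIndependent (S i) (fun t a => w i (a, t)) ?_
      fun t a => Submodule.subset_span ⟨(a, t), rfl⟩
    exact (hU.comp _ (Prod.mk_right_injective i)).map' reshape.toLinearMap reshape.ker
  obtain ⟨i₀⟩ := ‹Nonempty ι›
  refine ⟨finrank ℂ (S i₀), (hlow i₀).antisymm ?_⟩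
  by_contra! hlt
  have : Fintype.card ι * Fintype.card κ < Fintype.card ι * ∑ i, finrank ℂ (S i) :=
    calc Fintype.card ι * Fintype.card κ = ∑ _i : ι, Fintype.card κ := by simp
      _ < ∑ i, Fintype.card ι * finrank ℂ (S i) :=
        Finset.sum_lt_sum (fun i _ => hlow i) ⟨i₀, Finset.mem_univ _, hlt⟩
      _ = Fintype.card ι * ∑ i, finrank ℂ (S i) := by rw [Finset.mul_sum]
  exact this.not_ge (Nat.mul_le_mul_left _ hsum)

end Dimension

/-- if `k` is not a positive multiple of `n`, no bipartite unitary yields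
constant channels for all ancilla states. -/
theorem stmt4 (n k : ℕ) (hn : 0 < n) (hk : 0 < k)
    (h : ∀ r : ℕ, 0 < r → k ≠ r * n) :
    ¬ ∃ U : Matrix (Fin n × Fin k) (Fin n × Fin k) ℂ, IsUnitary U ∧
        ∀ β : Matrix (Fin k) (Fin k) ℂ, IsDensity β →
          ∀ ρ σ : Matrix (Fin n) (Fin n) ℂ, IsDensity ρ → IsDensity σ →
            channel U β ρ = channel U β σ := by
  rintro ⟨U, hU, hconst⟩
  have hoff : ∀ i j : Fin n, i ≠ j → ∀ β, IsDensity β → channel U β (single i j 1) = 0 :=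
    fun i j hij β hβ => map_single_eq_zero_of_const ((channelBilin U).flip β) (hconst β hβ) hij
  have horth : ∀ i j : Fin n, i ≠ j → ∀ a b t t',
      ∑ s, U (a, s) (i, t) * star (U (b, s) (j, t')) = 0 := by
    intro i j hij a b t t'
    have h0 := eq_zero_of_map_isDensity (channelBilin U (single i j 1)) (hoff i j hij)
    rw [← channel_single_single]
    exact congrFun₂ (LinearMap.congr_fun h0 (single t t' 1)) a b
  have : NeZero n := ⟨hn.ne'⟩
  have hUcols : LinearIndependent ℂ U.col :=
    linearIndependent_cols_of_isUnit (⟨U, Uᴴ, hU.1, hU.2⟩ : (Matrix _ _ ℂ)ˣ).isUnit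
  obtain ⟨r, hr⟩ := card_dvd_card_of_orthogonal_blocks U hUcols horth
  simp only [Fintype.card_fin] at hr
  exact h r (Nat.pos_of_mul_pos_left (hr ▸ hk)) (hr.trans (Nat.mul_comm n r))

end BipartiteUnitary

end
end

section
/- A unitary operator U on ℂ^n ⊗ ℂ^k satisfies L_{U,β}(I_n) = I_n for every density matrix β ∈ M_k^{1,+}(ℂ) if and only if its partial transpose U^Γ = (id ⊗ t)(U) is also a unitary matrix. Equivalently, U_unital = U_{nk} ∩ (U_{nk})^Γ. -/
/-!
Expanding the partial trace, the `(i, j)` entry of `L_{U,β}(I)` is the pairing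
`∑ t u, β t u * P (i, t) (j, u)` of `β` with the `(i, j)` block of `P = U^Γ (U^Γ)*`.
By scaling, this pairing equals `δᵢⱼ` on every density matrix iff it equals `δᵢⱼ * Tr β` on every
positive semidefinite `β`; on the rank-one matrices `x̄ xᵀ` this says that the quadratic form of
the block minus `δᵢⱼ • I` vanishes, and over `ℂ` polarisation then forces the block to be
`δᵢⱼ • I`. So `L_{U,β}` is unital for every `β` iff `P = I`, i.e. iff `U^Γ` is unitary.
-/

open Matrix Kronecker ComplexOrder

noncomputable section

namespace BipartiteUnitary

section

variable {n k : Type*} [Fintype n] [Fintype k]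

lemma channel_one_apply [DecidableEq n] (U : Matrix (n × k) (n × k) ℂ) (β : Matrix k k ℂ)
    (i j : n) :
    channel U β 1 i j = ∑ t, ∑ u, β t u * (pt U * (pt U)ᴴ) (i, t) (j, u) := by
  have hUβ : ∀ p a u, (U * ((1 : Matrix n n ℂ) ⊗ₖ β)) p (a, u) = ∑ t, U p (a, t) * β t u := by
    intro p a u
    simp only [mul_apply, kroneckerMap_apply, one_apply, Fintype.sum_prod_type, ite_mul, one_mul,
      zero_mul, mul_ite, mul_zero, Finset.sum_ite_irrel, Finset.sum_const_zero,
      Finset.sum_ite_eq', Finset.mem_univ, if_true]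
  simp only [channel, trB, pt, mul_apply (M := U * _), hUβ, Fintype.sum_prod_type, mul_apply,
    conjTranspose_apply, Finset.sum_mul, Finset.mul_sum]
  simp_rw [Finset.sum_comm (γ := n) (α := k)]
  rw [Finset.sum_comm_cycle]
  refine Finset.sum_congr rfl fun _ _ => Finset.sum_comm.trans ?_
  simp only [mul_assoc, mul_left_comm]

lemma eq_zero_of_forall_star_dotProduct_mulVec_self [DecidableEq k] {A : Matrix k k ℂ}
    (h : ∀ x, star x ⬝ᵥ A *ᵥ x = 0) : A = 0 := by
  apply toEuclideanLin.injective
  rw [map_zero, ← inner_map_self_eq_zero]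
  intro x
  rw [EuclideanSpace.inner_eq_star_dotProduct, toLpLin_apply, dotProduct_star, dotProduct_comm, h,
    star_zero]

lemma sum_mul_eq_mul_trace_of_posSemidef [DecidableEq k] {Q : Matrix k k ℂ} {c : ℂ}
    (h : ∀ β : Matrix k k ℂ, IsDensity β → ∑ t, ∑ u, β t u * Q t u = c)
    {β : Matrix k k ℂ} (hβ : β.PosSemidef) : ∑ t, ∑ u, β t u * Q t u = c * β.trace := by
  by_cases h0 : β.trace = 0
  · simp [hβ.trace_eq_zero_iff.1 h0]
  have hρ : IsDensity (β.trace⁻¹ • β) :=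
    ⟨hβ.smul (inv_nonneg.2 hβ.trace_nonneg), by rw [trace_smul, smul_eq_mul, inv_mul_cancel₀ h0]⟩
  have hρ_pairing := h _ hρ
  simp only [Matrix.smul_apply, smul_eq_mul, mul_assoc, ← Finset.mul_sum] at hρ_pairing
  rw [← hρ_pairing]
  field_simp

lemma forall_isDensity_sum_mul_eq_iff [DecidableEq k] {Q : Matrix k k ℂ} {c : ℂ} :
    (∀ β : Matrix k k ℂ, IsDensity β → ∑ t, ∑ u, β t u * Q t u = c) ↔ Q = c • 1 := by
  refine ⟨fun h => ?_, ?_⟩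
  swap
  · rintro rfl β ⟨-, hβ⟩
    simp only [trace, diag] at hβ
    simp [one_apply, ← Finset.sum_mul, hβ]
  rw [← sub_eq_zero]
  refine eq_zero_of_forall_star_dotProduct_mulVec_self fun x => ?_
  have hx := sum_mul_eq_mul_trace_of_posSemidef h (posSemidef_vecMulVec_star_self x)
  simp only [vecMulVec_apply, trace, diag, mul_assoc, ← Finset.mul_sum] at hx
  rw [sub_mulVec, smul_mulVec, one_mulVec, dotProduct_sub, dotProduct_smul, smul_eq_mul,
    sub_eq_zero]
  simpa only [dotProduct, mulVec, Pi.star_apply, mul_comm (x _)] using hx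

end

theorem stmt6_general (n k : ℕ)
    (U : Matrix (Fin n × Fin k) (Fin n × Fin k) ℂ) :
    (∀ β : Matrix (Fin k) (Fin k) ℂ, IsDensity β → channel U β 1 = 1)
    ↔ IsUnitary (pt U) := by
  set P := pt U * (pt U)ᴴ
  calc (∀ β : Matrix (Fin k) (Fin k) ℂ, IsDensity β → channel U β 1 = 1)
      ↔ ∀ i j, ∀ β : Matrix (Fin k) (Fin k) ℂ, IsDensity β →
          ∑ t, ∑ u, β t u * P (i, t) (j, u) = (1 : Matrix (Fin n) (Fin n) ℂ) i j := by
        simp only [← Matrix.ext_iff, channel_one_apply]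
        exact ⟨fun h i j β hβ => h β hβ i j, fun h β hβ i j => h i j β hβ⟩
    _ ↔ ∀ i j, Matrix.of (fun t u => P (i, t) (j, u))
          = (1 : Matrix (Fin n) (Fin n) ℂ) i j • (1 : Matrix (Fin k) (Fin k) ℂ) :=
        forall₂_congr fun _ _ => forall_isDensity_sum_mul_eq_iff
    _ ↔ P = 1 := by
        rw [← one_kronecker_one]
        simp only [← Matrix.ext_iff, Prod.forall, of_apply, kroneckerMap_apply, Matrix.smul_apply,
          smul_eq_mul]
        exact forall_congr' fun _ => forall_comm
    _ ↔ IsUnitary (pt U) := ⟨fun h => ⟨h, mul_eq_one_comm.mp h⟩, And.left⟩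

/-- a bipartite unitary yields unital channels for all ancilla states
iff its partial transpose is unitary. -/
theorem stmt6 (n k : ℕ) (hn : 0 < n) (hk : 0 < k)
    (U : Matrix (Fin n × Fin k) (Fin n × Fin k) ℂ) (hU : IsUnitary U) :
    (∀ β : Matrix (Fin k) (Fin k) ℂ, IsDensity β → channel U β 1 = 1)
    ↔ IsUnitary (pt U) :=
  stmt6_general n k U

end BipartiteUnitary
end
end

section
/- A unitary operator U on ℂ^n ⊗ ℂ^k satisfies L_{U,β}(I_n) = I_n for every density matrix β ∈ M_k^{1,+}(ℂ) if and only if it satisfies the symmetric condition with the roles of the two factors exchanged: Tr_A(U (α ⊗ I_k) U*) = I_k for every density matrix α ∈ M_n^{1,+}(ℂ), where Tr_A = Tr ⊗ id is the partial trace over the first factor. -/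
/-!
Write `P = U^Γ` for the partial transpose of `U` in the second factor. Expanding the partial
traces entrywise, `Tr_B (U (I ⊗ E_tu) U*)_ij = (P P*)_(i,t),(j,u)` and
`Tr_A (U (E_ab ⊗ I) U*)_st = (P* P)_(b,t),(a,s)`. Both conditions are linear in the ancilla state,
and density matrices span all matrices (every rank-one `v w*` is a combination of four `x x*` by
polarization), so they hold for all density matrices iff they hold as `β ↦ Tr β • I` on matrix
units. Hence the first condition says `P P* = 1` and the second `P* P = 1`, and these are
equivalent for square matrices.
-/

open Matrix Kronecker ComplexOrder

noncomputable section

namespace BipartiteUnitary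

section Density

variable {m : Type*} [Fintype m]

theorem vecMulVec_star_eq_polarization (v w : m → ℂ) :
    vecMulVec v (star w) = (4 : ℂ)⁻¹ •
      (vecMulVec (v + w) (star (v + w)) - vecMulVec (v - w) (star (v - w)) +
        Complex.I • (vecMulVec (v + Complex.I • w) (star (v + Complex.I • w)) -
          vecMulVec (v - Complex.I • w) (star (v - Complex.I • w)))) := by
  ext i j
  simp only [vecMulVec_apply, Matrix.smul_apply, Matrix.add_apply, Matrix.sub_apply, Pi.add_apply,
    Pi.sub_apply, Pi.smul_apply, Pi.star_apply, star_add, star_sub, star_smul, smul_eq_mul,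
    Complex.star_def, Complex.conj_I]
  ring_nf
  rw [Complex.I_sq]
  ring

variable [DecidableEq m]

theorem span_isDensity_eq_top : Submodule.span ℂ {β : Matrix m m ℂ | IsDensity β} = ⊤ := by
  have hrank1 (v : m → ℂ) :
      vecMulVec v (star v) ∈ Submodule.span ℂ {β : Matrix m m ℂ | IsDensity β} :=
    mem_span_isDensity_of_posSemidef (posSemidef_vecMulVec_self_star v)
  rw [eq_top_iff, ← (Matrix.stdBasis ℂ m m).span_eq, Submodule.span_le]
  rintro _ ⟨⟨t, u⟩, rfl⟩
  have hstar : star (Pi.single u 1 : m → ℂ) = Pi.single u 1 := by simp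
  rw [SetLike.mem_coe, stdBasis_eq_single, single_eq_single_vecMulVec_single, ← hstar,
    vecMulVec_star_eq_polarization]
  exact Submodule.smul_mem _ _ (add_mem (sub_mem (hrank1 _) (hrank1 _))
    (Submodule.smul_mem _ _ (sub_mem (hrank1 _) (hrank1 _))))

theorem trace_single_one {R : Type*} [AddCommMonoidWithOne R] (t u : m) :
    (single t u (1 : R)).trace = (1 : Matrix m m R) t u := by
  by_cases h : t = u
  · rw [h, trace_single_eq_same, one_apply_eq]
  · rw [trace_single_eq_of_ne t u 1 h, one_apply_ne h]

theorem forall_isDensity_eq_iff {M : Type*} [AddCommMonoid M] [Module ℂ M]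
    (f : Matrix m m ℂ →ₗ[ℂ] M) (c : M) :
    (∀ β, IsDensity β → f β = c) ↔ ∀ t u, f (single t u 1) = (1 : Matrix m m ℂ) t u • c := by
  set g := (traceLinearMap m ℂ ℂ).smulRight c
  have hg (β : Matrix m m ℂ) : g β = β.trace • c := rfl
  calc (∀ β, IsDensity β → f β = c) ↔ f = g := by
        refine ⟨fun h => LinearMap.ext_on span_isDensity_eq_top fun β hβ => ?_, ?_⟩
        · rw [h β hβ, hg, hβ.2, one_smul]
        · rintro rfl β hβ
          rw [hg, hβ.2, one_smul]
    _ ↔ ∀ t u, f (single t u 1) = (1 : Matrix m m ℂ) t u • c := by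
        simp only [← trace_single_one, ← hg]
        refine ⟨fun h t u => h ▸ rfl, fun h => ext_linearMap ℂ fun t u => ?_⟩
        ext1
        exact h t u

end Density

section PartialTranspose

variable {n k : Type*} [Fintype n] [Fintype k] [DecidableEq n] [DecidableEq k]
  (U : Matrix (n × k) (n × k) ℂ)

def channelAtOne : Matrix k k ℂ →ₗ[ℂ] Matrix n n ℂ where
  toFun β := channel U β 1
  map_add' β γ := by
    ext i j
    simp [channel, trB, kronecker_add, Matrix.mul_add, Matrix.add_mul, Finset.sum_add_distrib]
  map_smul' c β := by
    ext i j
    simp [channel, trB, kronecker_smul, Finset.mul_sum]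

def trAConjKroneckerOne : Matrix n n ℂ →ₗ[ℂ] Matrix k k ℂ where
  toFun α := trA (U * (α ⊗ₖ (1 : Matrix k k ℂ)) * Uᴴ)
  map_add' α γ := by
    ext s t
    simp [trA, add_kronecker, Matrix.mul_add, Matrix.add_mul, Finset.sum_add_distrib]
  map_smul' c α := by
    ext s t
    simp [trA, smul_kronecker, Finset.mul_sum]

theorem channelAtOne_single_apply (t u : k) (i j : n) :
    channelAtOne U (single t u 1) i j = (pt U * (pt U)ᴴ) (i, t) (j, u) := by
  simp only [channelAtOne, channel, LinearMap.coe_mk, AddHom.coe_mk, trB, mul_apply,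
    kroneckerMap_apply, one_apply, single_apply, ite_and, mul_ite, mul_one, mul_zero,
    Fintype.sum_prod_type, Finset.sum_ite_eq, Finset.mem_univ, ↓reduceIte, Finset.sum_ite_irrel,
    Finset.sum_ite_eq', Finset.sum_const_zero, conjTranspose_apply, RCLike.star_def, ite_mul,
    zero_mul, pt]
  rw [Finset.sum_comm]

theorem trAConjKroneckerOne_single_apply (a b : n) (s t : k) :
    trAConjKroneckerOne U (single a b 1) s t = ((pt U)ᴴ * pt U) (b, t) (a, s) := by
  simp [trAConjKroneckerOne, trA, mul_apply, pt, Fintype.sum_prod_type, one_apply, single_apply,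
    ite_and, mul_comm]

theorem forall_isDensity_channel_one_iff :
    (∀ β, IsDensity β → channel U β 1 = 1) ↔ pt U * (pt U)ᴴ = 1 := by
  refine (forall_isDensity_eq_iff (channelAtOne U) 1).trans ⟨fun h => ?_, fun h t u => ?_⟩
  · ext ⟨i, t⟩ ⟨j, u⟩
    rw [← channelAtOne_single_apply, h, ← one_kronecker_one, kroneckerMap_apply, Matrix.smul_apply,
      smul_eq_mul, mul_comm]
  · ext i j
    rw [channelAtOne_single_apply, h, ← one_kronecker_one, kroneckerMap_apply, Matrix.smul_apply,
      smul_eq_mul, mul_comm]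

theorem forall_isDensity_trA_conj_kronecker_one_iff :
    (∀ α, IsDensity α → trA (U * (α ⊗ₖ (1 : Matrix k k ℂ)) * Uᴴ) = 1) ↔ (pt U)ᴴ * pt U = 1 := by
  refine (forall_isDensity_eq_iff (trAConjKroneckerOne U) 1).trans ⟨fun h => ?_, fun h a b => ?_⟩
  · ext ⟨b, t⟩ ⟨a, s⟩
    rw [← trAConjKroneckerOne_single_apply, h, ← one_kronecker_one, kroneckerMap_apply,
      Matrix.smul_apply, smul_eq_mul, isSymm_one.apply a b, isSymm_one.apply s t]
  · ext s t
    rw [trAConjKroneckerOne_single_apply, h, ← one_kronecker_one, kroneckerMap_apply,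
      Matrix.smul_apply, smul_eq_mul, isSymm_one.apply a b, isSymm_one.apply s t]

end PartialTranspose

theorem stmt7_general (n k : ℕ)
    (U : Matrix (Fin n × Fin k) (Fin n × Fin k) ℂ) :
    (∀ β : Matrix (Fin k) (Fin k) ℂ, IsDensity β → channel U β 1 = 1)
    ↔ (∀ α : Matrix (Fin n) (Fin n) ℂ, IsDensity α →
        trA (U * (α ⊗ₖ (1 : Matrix (Fin k) (Fin k) ℂ)) * Uᴴ) = 1) := by
  rw [forall_isDensity_channel_one_iff, forall_isDensity_trA_conj_kronecker_one_iff]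
  exact mul_eq_one_comm

/-- a bipartite unitary yields unital channels for all ancilla states
iff the same holds with the roles of the two tensor factors exchanged. -/
theorem stmt7 (n k : ℕ) (hn : 0 < n) (hk : 0 < k)
    (U : Matrix (Fin n × Fin k) (Fin n × Fin k) ℂ) (hU : IsUnitary U) :
    (∀ β : Matrix (Fin k) (Fin k) ℂ, IsDensity β → channel U β 1 = 1)
    ↔ (∀ α : Matrix (Fin n) (Fin n) ℂ, IsDensity α →
        trA (U * (α ⊗ₖ (1 : Matrix (Fin k) (Fin k) ℂ)) * Uᴴ) = 1) :=
  stmt7_general n k U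

end BipartiteUnitary
end
end

section
/- Let U be a unitary operator on ℂ^n ⊗ ℂ^k such that for every density matrix β ∈ M_k^{1,+}(ℂ) the channel L_{U,β} is mixed unitary, i.e. L_{U,β}(X) = Σ_{i=1}^r p_i U_i X U_i* for some probabilities p_i ≥ 0 with Σ p_i = 1 and unitaries U_i on ℂ^n (both possibly depending on β). Then for every unit vector f ∈ ℂ^k and every orthonormal basis {e_i}_{i=1}^k of ℂ^k, the linear span of the n×n matrices E_i := (I_n ⊗ e_i*) U (I_n ⊗ f), i = 1, …, k, contains a unitary matrix. -/
open Matrix Kronecker ComplexOrder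

noncomputable section

namespace BipartiteUnitary

/-- The matrix `E = (I_n ⊗ e*) U (I_n ⊗ f) ∈ M_n(ℂ)`. -/
def Emat {n k : ℕ} (U : Matrix (Fin n × Fin k) (Fin n × Fin k) ℂ)
    (e f : Fin k → ℂ) : Matrix (Fin n) (Fin n) ℂ :=
  fun a b => ∑ s, ∑ t, star (e s) * U (a, s) (b, t) * f t

/-!
For `β = f f*` the channel `L_{U,β}` has the Kraus operators `F_s = (I ⊗ ε_s*) U (I ⊗ f)`,
`ε_s` the standard basis, and the `E_i` are their images under the unitary change of basis
`ε ↦ e`, hence Kraus operators of the same channel. Mixed unitarity gives a second Kraus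
family `√p_j U_j`. Kraus operators of one channel all span the range of its Choi matrix,
so `√p_j U_j` lies in the span of the `E_i`; rescaling one with `p_j > 0` gives a unitary.
-/

section Kraus

variable {R K K' m n : Type*}

def krausColumns (A : K → Matrix m n R) : Matrix (m × n) K R :=
  of fun p i => A i p.1 p.2

lemma krausColumns_mulVec [CommSemiring R] [Fintype K] (A : K → Matrix m n R) (c : K → R) :
    krausColumns A *ᵥ c = fun p => (∑ i, c i • A i) p.1 p.2 := by
  ext p
  simp [krausColumns, mulVec, dotProduct, Matrix.sum_apply, mul_comm]

variable [Fintype K] [Fintype K'] [Fintype n]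

lemma krausColumns_mul_conjTranspose_apply [CommSemiring R] [StarRing R] [DecidableEq n]
    (A : K → Matrix m n R) (a c : m) (b d : n) :
    (krausColumns A * (krausColumns A)ᴴ) (a, b) (c, d) =
      (∑ i, A i * single b d (1 : R) * (A i)ᴴ) a c := by
  simp [krausColumns, mul_apply, Matrix.sum_apply, single, ite_and, Finset.sum_ite_eq]

lemma krausColumns_mul_conjTranspose_eq [CommSemiring R] [StarRing R] [DecidableEq n]
    {A : K → Matrix m n R} {B : K' → Matrix m n R}
    (h : ∀ X : Matrix n n R, ∑ i, A i * X * (A i)ᴴ = ∑ j, B j * X * (B j)ᴴ) :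
    krausColumns A * (krausColumns A)ᴴ = krausColumns B * (krausColumns B)ᴴ := by
  ext ⟨a, b⟩ ⟨c, d⟩
  rw [krausColumns_mul_conjTranspose_apply, krausColumns_mul_conjTranspose_apply, h]

lemma range_mulVecLin_self_mul_conjTranspose [Fintype m] {ι : Type*} [Fintype ι] [Field R]
    [PartialOrder R] [StarRing R] [StarOrderedRing R] (M : Matrix m ι R) :
    LinearMap.range (M * Mᴴ).mulVecLin = LinearMap.range M.mulVecLin := by
  refine Submodule.eq_of_le_of_finrank_eq ?_ (rank_self_mul_conjTranspose M)
  rw [mulVecLin_mul]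
  exact LinearMap.range_comp_le_range _ _

/-- Both spans are the range of the common Choi matrix `krausColumns A * (krausColumns A)ᴴ`. -/
theorem mem_span_of_sum_mul_mul_conjTranspose_eq [Fintype m] [Field R] [PartialOrder R]
    [StarRing R] [StarOrderedRing R] [DecidableEq n] {A : K → Matrix m n R} {B : K' → Matrix m n R}
    (h : ∀ X : Matrix n n R, ∑ i, A i * X * (A i)ᴴ = ∑ j, B j * X * (B j)ᴴ) (j : K') :
    B j ∈ Submodule.span R (Set.range A) := by
  classical
  have hB : (fun p : m × n => B j p.1 p.2) ∈ LinearMap.range (krausColumns B).mulVecLin :=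
    ⟨Pi.single j 1, by ext p; simp [krausColumns]⟩
  rw [← range_mulVecLin_self_mul_conjTranspose, ← krausColumns_mul_conjTranspose_eq h,
    range_mulVecLin_self_mul_conjTranspose] at hB
  obtain ⟨c, hc⟩ := hB
  rw [Submodule.mem_span_range_iff_exists_fun]
  refine ⟨c, ?_⟩
  ext a b
  simpa [krausColumns_mulVec] using congrFun hc (a, b)

theorem sum_mul_mul_conjTranspose_of_isometry [CommSemiring R] [StarRing R] [DecidableEq K]
    (A : K → Matrix m n R) (W : Matrix K' K R) (hW : Wᴴ * W = 1) (X : Matrix n n R) :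
    ∑ i, (∑ s, W i s • A s) * X * (∑ s, W i s • A s)ᴴ = ∑ s, A s * X * (A s)ᴴ := by
  calc ∑ i, (∑ s, W i s • A s) * X * (∑ s, W i s • A s)ᴴ
      = ∑ i, ∑ s', ∑ s, (star (W i s') * W i s) • (A s * X * (A s')ᴴ) := by
        simp only [conjTranspose_sum, conjTranspose_smul, Matrix.sum_mul, Matrix.mul_sum,
          Matrix.smul_mul, Matrix.mul_smul, Finset.smul_sum, smul_smul]
    _ = ∑ s', ∑ s, (Wᴴ * W) s' s • (A s * X * (A s')ᴴ) := by
        simp only [mul_apply, conjTranspose_apply, Finset.sum_smul]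
        rw [Finset.sum_comm]
        exact Finset.sum_congr rfl fun s' _ => Finset.sum_comm
    _ = ∑ s, A s * X * (A s)ᴴ := by simp [hW, one_apply]

end Kraus

section Emat

variable {n k : ℕ}

@[simp]
lemma Emat_single_apply (U : Matrix (Fin n × Fin k) (Fin n × Fin k) ℂ) (f : Fin k → ℂ)
    (s : Fin k) (a b : Fin n) :
    Emat U (Pi.single s 1) f a b = ∑ t, U (a, s) (b, t) * f t := by
  simp [Emat, Pi.single_apply]

lemma Emat_eq_sum_smul (U : Matrix (Fin n × Fin k) (Fin n × Fin k) ℂ) (g f : Fin k → ℂ) :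
    Emat U g f = ∑ s, star (g s) • Emat U (Pi.single s 1) f := by
  ext a b
  simp only [Matrix.sum_apply, Matrix.smul_apply, Emat_single_apply, smul_eq_mul]
  simp [Emat, Finset.mul_sum, mul_assoc]

lemma channel_vecMulVec (U : Matrix (Fin n × Fin k) (Fin n × Fin k) ℂ) (f : Fin k → ℂ)
    (X : Matrix (Fin n) (Fin n) ℂ) :
    channel U (vecMulVec f (star f)) X =
      ∑ s, Emat U (Pi.single s 1) f * X * (Emat U (Pi.single s 1) f)ᴴ := by
  ext a b
  simp only [channel, trB, Matrix.sum_apply, mul_apply, conjTranspose_apply,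
    kroneckerMap_apply, vecMulVec_apply, Emat_single_apply, Fintype.sum_prod_type,
    Finset.sum_mul, Finset.mul_sum, star_sum, star_mul', Pi.star_apply]
  refine Finset.sum_congr rfl fun s _ => Finset.sum_congr rfl fun d _ =>
    Finset.sum_congr rfl fun u _ => Finset.sum_congr rfl fun c _ =>
    Finset.sum_congr rfl fun t _ => by ring

lemma ONB.conjTranspose_mul_self {ι : Type*} [Fintype ι] [DecidableEq ι] {e : ι → ι → ℂ}
    (he : ONB e) : (of fun i s => star (e i s))ᴴ * of (fun i s => star (e i s)) = 1 := by
  rw [mul_eq_one_comm]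
  ext i j
  simpa [mul_apply, one_apply] using he i j

lemma sum_Emat_mul_mul_conjTranspose (U : Matrix (Fin n × Fin k) (Fin n × Fin k) ℂ)
    (f : Fin k → ℂ) {e : Fin k → Fin k → ℂ} (he : ONB e) (X : Matrix (Fin n) (Fin n) ℂ) :
    ∑ i, Emat U (e i) f * X * (Emat U (e i) f)ᴴ = channel U (vecMulVec f (star f)) X := by
  simp_rw [Emat_eq_sum_smul U (e _) f]
  rw [channel_vecMulVec]
  exact sum_mul_mul_conjTranspose_of_isometry _ _ he.conjTranspose_mul_self X

end Emat

lemma isDensity_vecMulVec {ι : Type*} [Fintype ι] {f : ι → ℂ}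
    (hf : ∑ s, star (f s) * f s = 1) : IsDensity (vecMulVec f (star f)) := by
  refine ⟨?_, ?_⟩
  · rw [vecMulVec_eq Unit, ← conjTranspose_replicateCol]
    exact posSemidef_self_mul_conjTranspose _
  · simpa [trace, vecMulVec_apply, mul_comm] using hf

lemma sum_ofReal_smul_mul_mul_conjTranspose {ι m n : Type*} [Fintype ι] [Fintype n]
    (p : ι → ℝ) (hp : ∀ i, 0 ≤ p i) (V : ι → Matrix m n ℂ) (X : Matrix n n ℂ) :
    ∑ i, (p i : ℂ) • (V i * X * (V i)ᴴ) =
      ∑ i, ((√(p i) : ℂ) • V i) * X * ((√(p i) : ℂ) • V i)ᴴ := by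
  refine Finset.sum_congr rfl fun i _ => ?_
  rw [conjTranspose_smul, Matrix.smul_mul, Matrix.mul_smul, Matrix.smul_mul, smul_smul,
    Complex.star_def, Complex.conj_ofReal, ← Complex.ofReal_mul, Real.mul_self_sqrt (hp i)]

theorem stmt9_general (n k : ℕ)
    (U : Matrix (Fin n × Fin k) (Fin n × Fin k) ℂ)
    (hmix : ∀ β : Matrix (Fin k) (Fin k) ℂ, IsDensity β →
      ∃ (r : ℕ) (p : Fin r → ℝ) (Us : Fin r → Matrix (Fin n) (Fin n) ℂ),
        (∀ i, 0 ≤ p i) ∧ (∑ i, p i) = 1 ∧ (∀ i, IsUnitary (Us i)) ∧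
        ∀ X : Matrix (Fin n) (Fin n) ℂ,
          channel U β X = ∑ i, (p i : ℂ) • (Us i * X * (Us i)ᴴ))
    (f : Fin k → ℂ) (hf : (∑ s, star (f s) * f s) = 1)
    (e : Fin k → Fin k → ℂ) (he : ONB e) :
    ∃ c : Fin k → ℂ, IsUnitary (∑ i, c i • Emat U (e i) f) := by
  obtain ⟨r, p, Us, hp0, hp1, hUs, hch⟩ := hmix _ (isDensity_vecMulVec hf)
  obtain ⟨j, -, hpj⟩ := Finset.exists_ne_zero_of_sum_ne_zero (hp1 ▸ one_ne_zero)
  have hspan : (√(p j) : ℂ) • Us j ∈ Submodule.span ℂ (Set.range fun i => Emat U (e i) f) :=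
    mem_span_of_sum_mul_mul_conjTranspose_eq (B := fun l => (√(p l) : ℂ) • Us l) (fun X => by
      rw [sum_Emat_mul_mul_conjTranspose U f he, hch,
        sum_ofReal_smul_mul_mul_conjTranspose _ hp0]) j
  obtain ⟨c, hc⟩ := (Submodule.mem_span_range_iff_exists_fun ℂ).mp hspan
  have hsqrt : (√(p j) : ℂ) ≠ 0 :=
    Complex.ofReal_ne_zero.mpr (Real.sqrt_ne_zero'.mpr ((hp0 j).lt_of_ne' hpj))
  refine ⟨fun i => (√(p j) : ℂ)⁻¹ * c i, ?_⟩
  simp_rw [mul_smul, ← Finset.smul_sum, hc, smul_smul, inv_mul_cancel₀ hsqrt, one_smul]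
  exact hUs j

/-- if a bipartite unitary yields mixed unitary channels for all ancilla
states, then for every unit vector `f` and orthonormal basis `{e_i}` of `ℂ^k`, the span
of the matrices `E_i = (I_n ⊗ e_i*) U (I_n ⊗ f)` contains a unitary matrix. -/
theorem stmt9 (n k : ℕ)
    (U : Matrix (Fin n × Fin k) (Fin n × Fin k) ℂ) (hU : IsUnitary U)
    (hmix : ∀ β : Matrix (Fin k) (Fin k) ℂ, IsDensity β →
      ∃ (r : ℕ) (p : Fin r → ℝ) (Us : Fin r → Matrix (Fin n) (Fin n) ℂ),
        (∀ i, 0 ≤ p i) ∧ (∑ i, p i) = 1 ∧ (∀ i, IsUnitary (Us i)) ∧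
        ∀ X : Matrix (Fin n) (Fin n) ℂ,
          channel U β X = ∑ i, (p i : ℂ) • (Us i * X * (Us i)ᴴ))
    (f : Fin k → ℂ) (hf : (∑ s, star (f s) * f s) = 1)
    (e : Fin k → Fin k → ℂ) (he : ONB e) :
    ∃ c : Fin k → ℂ, IsUnitary (∑ i, c i • Emat U (e i) f) :=
  stmt9_general n k U hmix f hf e he

end BipartiteUnitary
end
end

section
/- Let n = 2. Every unitary U on ℂ² ⊗ ℂ^k of the form U = e_1f_1* ⊗ U_1 + e_2f_2* ⊗ U_2, where U_1, U_2 are unitaries on ℂ^k and {e_1, e_2}, {f_1, f_2} are orthonormal bases of ℂ², belongs to U^A_block-diag, i.e. U = Σ_{i=1}^k V_i ⊗ g_ih_i* for some unitaries V_i on ℂ² and orthonormal bases {g_i}, {h_i} of ℂ^k. In other words, for n = 2, U^B_block-diag ⊆ U^A_block-diag. -/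
open Matrix Kronecker ComplexOrder

noncomputable section

namespace BipartiteUnitary

/-!
Write `W = U1ᴴ U2`, a unitary, and diagonalize it as `W = G diag(λ) Gᴴ` with `|λ i| = 1`. Then
`U = ∑ i, (e₀f₀* + λ i • e₁f₁*) ⊗ (U1 gᵢ) gᵢ*`, where `gᵢ` are the columns of `G`; the orthonormal
families `U1 gᵢ` and `gᵢ` give the required bases, and each `e₀f₀* + λ i • e₁f₁*` is unitary.

The spectral theorem for a unitary `W` is reduced to the Hermitian one by a Cayley transform: for
a unimodular `c` outside the spectrum of `W`, `H = i (c - W)⁻¹ (c + W)` is Hermitian, and an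
eigenvector of `H` with eigenvalue `d` is an eigenvector of `W` with eigenvalue
`c (d - i) / (d + i)`.
-/

section UnitaryMatrices

variable {m : Type*} [Fintype m] [DecidableEq m]

lemma isUnitary_iff_mem_unitaryGroup {U : Matrix m m ℂ} :
    IsUnitary U ↔ U ∈ unitaryGroup m ℂ :=
  ⟨fun h => ⟨h.2, h.1⟩, fun h => ⟨h.2, h.1⟩⟩

lemma onb_transpose_iff {A : Matrix m m ℂ} : ONB Aᵀ ↔ A ∈ unitaryGroup m ℂ := by
  rw [mem_unitaryGroup_iff', ← Matrix.ext_iff]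
  simp [ONB, mul_apply, one_apply]

lemma diagonal_mem_unitaryGroup_iff {d : m → ℂ} :
    diagonal d ∈ unitaryGroup m ℂ ↔ ∀ i, star (d i) * d i = 1 := by
  rw [mem_unitaryGroup_iff', star_eq_conjTranspose, diagonal_conjTranspose,
    diagonal_mul_diagonal, ← diagonal_one, diagonal_eq_diagonal_iff]
  rfl

lemma mul_diagonal_mul_conjTranspose {l l' : Type*} (A : Matrix l m ℂ) (B : Matrix l' m ℂ)
    (d : m → ℂ) : A * diagonal d * Bᴴ = ∑ i, d i • vecMulVec (Aᵀ i) (star (Bᵀ i)) := by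
  ext s t
  rw [mul_apply]
  simp [mul_diagonal, Matrix.sum_apply, vecMulVec_apply, mul_assoc, mul_left_comm]

lemma exists_star_mul_self_eq_one_notMem_spectrum (W : Matrix m m ℂ) :
    ∃ c : ℂ, star c * c = 1 ∧ c ∉ spectrum ℂ W := by
  have hsphere : (Metric.sphere (0 : ℂ) 1).Infinite :=
    (isPreconnected_sphere (by simp [Complex.rank_real_complex]) 0 1).infinite_of_nontrivial
      ⟨1, by simp, -1, by simp, by norm_num⟩
  obtain ⟨c, hc, hcW⟩ := (hsphere.sdiff W.finite_spectrum).nonempty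
  refine ⟨c, ?_, hcW⟩
  rw [mem_sphere_zero_iff_norm] at hc
  rw [Complex.star_def, Complex.conj_mul', hc]
  simp

end UnitaryMatrices

section Spectral

open Complex

variable {m : Type*} [Fintype m] [DecidableEq m] {W : Matrix m m ℂ} {c : ℂ}

lemma isHermitian_cayley (hW : W ∈ unitaryGroup m ℂ) (hc : star c * c = 1)
    (hA : IsUnit (c • 1 - W)) : (I • ((c • 1 - W)⁻¹ * (c • 1 + W))).IsHermitian := by
  set A := c • (1 : Matrix m m ℂ) - W
  have hAinv : A⁻¹ * A = 1 := nonsing_inv_mul A ((isUnit_iff_isUnit_det A).mp hA)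
  -- `H = A⁻¹ (I • (c • 1 + W) * Aᴴ) A⁻¹ᴴ`, and `(c • 1 + W) * Aᴴ` is skew-Hermitian
  have hprod : (c • 1 + W) * Aᴴ = star c • W - c • Wᴴ := by
    have hWW : W * Wᴴ = 1 := mem_unitaryGroup_iff.mp hW
    simp only [A, conjTranspose_sub, conjTranspose_smul, conjTranspose_one, add_mul, mul_sub,
      smul_mul_smul, Matrix.smul_mul, Matrix.mul_smul, one_mul, mul_one, hWW, mul_comm c, hc,
      one_smul]
    abel
  have hM : (I • ((c • 1 + W) * Aᴴ)).IsHermitian := by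
    rw [hprod, IsHermitian, conjTranspose_smul, conjTranspose_sub, conjTranspose_smul,
      conjTranspose_smul, conjTranspose_conjTranspose, star_star, Complex.star_def, conj_I,
      neg_smul, ← smul_neg, neg_sub]
  convert isHermitian_mul_mul_conjTranspose A⁻¹ hM using 1
  rw [Matrix.mul_smul, Matrix.smul_mul, mul_assoc, mul_assoc, ← conjTranspose_mul, hAinv,
    conjTranspose_one, mul_one]

lemma mulVec_eq_smul_of_cayley {H : Matrix m m ℂ}
    (hcay : (c • 1 - W) * H = I • (c • 1 + W)) {v : m → ℂ} {d : ℝ}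
    (hv : H *ᵥ v = (d : ℂ) • v) : W *ᵥ v = (c * (d - I) / (d + I)) • v := by
  have h := congrArg (· *ᵥ v) hcay
  simp only [← mulVec_mulVec, hv, sub_mulVec, add_mulVec, smul_mulVec, one_mulVec,
    mulVec_smul] at h
  have hd : (d : ℂ) + I ≠ 0 := fun h0 => by simpa using congrArg Complex.im h0
  apply smul_right_injective _ hd
  simp only [smul_smul, mul_div_cancel₀ _ hd]
  linear_combination (norm := module) (-1 : ℂ) • h

lemma eq_mul_diagonal_mul_star_of_mulVec_transpose {V : Matrix m m ℂ}
    (hV : V ∈ unitaryGroup m ℂ) {lam : m → ℂ} (h : ∀ j, W *ᵥ Vᵀ j = lam j • Vᵀ j) :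
    W = V * diagonal lam * star V := by
  have hWV : W * V = V * diagonal lam := by
    ext i j
    rw [mul_diagonal]
    simpa [mulVec, dotProduct, mul_apply, mul_comm] using congrFun (h j) i
  rw [← hWV, mul_assoc, mem_unitaryGroup_iff.mp hV, mul_one]

lemma exists_diagonalization_of_cayley {H : Matrix m m ℂ} (hH : H.IsHermitian)
    (hcay : (c • 1 - W) * H = I • (c • 1 + W)) :
    ∃ V ∈ unitaryGroup m ℂ, ∃ lam : m → ℂ, W = V * diagonal lam * star V :=
  ⟨_, hH.eigenvectorUnitary.2, _, eq_mul_diagonal_mul_star_of_mulVec_transpose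
    hH.eigenvectorUnitary.2 fun j =>
      mulVec_eq_smul_of_cayley hcay (by simpa using hH.mulVec_eigenvectorBasis j)⟩

theorem exists_diagonalization_of_mem_unitaryGroup (hW : W ∈ unitaryGroup m ℂ) :
    ∃ V ∈ unitaryGroup m ℂ, ∃ lam : m → ℂ, (∀ i, star (lam i) * lam i = 1) ∧
      W = V * diagonal lam * star V := by
  obtain ⟨c, hc, hcW⟩ := exists_star_mul_self_eq_one_notMem_spectrum W
  have hA : IsUnit (c • 1 - W) := by
    simpa [Algebra.algebraMap_eq_smul_one] using spectrum.notMem_iff.mp hcW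
  have hcay : (c • 1 - W) * (I • ((c • 1 - W)⁻¹ * (c • 1 + W))) = I • (c • 1 + W) := by
    rw [Matrix.mul_smul, ← mul_assoc, mul_nonsing_inv _ ((isUnit_iff_isUnit_det _).mp hA),
      one_mul]
  obtain ⟨V, hV, lam, hWV⟩ := exists_diagonalization_of_cayley (isHermitian_cayley hW hc hA) hcay
  refine ⟨V, hV, lam, ?_, hWV⟩
  rw [← diagonal_mem_unitaryGroup_iff]
  convert mul_mem (mul_mem (Unitary.star_mem hV) hW) hV using 1
  rw [hWV, mul_assoc, mul_assoc, mem_unitaryGroup_iff'.mp hV, mul_one, ← mul_assoc,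
    mem_unitaryGroup_iff'.mp hV, one_mul]

end Spectral

section BlockDiagonal

lemma sum_kronecker {ι l m n p : Type*} [Fintype ι] (A : ι → Matrix l m ℂ)
    (B : Matrix n p ℂ) : (∑ i, A i) ⊗ₖ B = ∑ i, A i ⊗ₖ B := by
  ext
  simp [Matrix.sum_apply, Finset.sum_mul]

lemma kronecker_sum {ι l m n p : Type*} [Fintype ι] (A : Matrix l m ℂ)
    (B : ι → Matrix n p ℂ) : A ⊗ₖ (∑ i, B i) = ∑ i, A ⊗ₖ B i := by
  ext
  simp [Matrix.sum_apply, Finset.mul_sum]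

theorem memUA_sum_vecMulVec_kronecker {n k : ℕ} {e f : Fin n → Fin n → ℂ} (he : ONB e)
    (hf : ONB f) {P G : Matrix (Fin k) (Fin k) ℂ} (hP : P ∈ unitaryGroup (Fin k) ℂ)
    (hG : G ∈ unitaryGroup (Fin k) ℂ) {μ : Fin n → Fin k → ℂ}
    (hμ : ∀ j i, star (μ j i) * μ j i = 1) :
    memUA (∑ j, vecMulVec (e j) (star (f j)) ⊗ₖ (P * diagonal (μ j) * star G)) := by
  have hE := (onb_transpose_iff (A := (of e)ᵀ)).1 he
  have hF := (onb_transpose_iff (A := (of f)ᵀ)).1 hf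
  refine ⟨fun i => (of e)ᵀ * diagonal (fun j => μ j i) * star (of f)ᵀ, Pᵀ, Gᵀ, fun i => ?_,
    onb_transpose_iff.2 hP, onb_transpose_iff.2 hG, ?_⟩
  · rw [isUnitary_iff_mem_unitaryGroup]
    exact mul_mem (mul_mem hE (diagonal_mem_unitaryGroup_iff.2 fun j => hμ j i))
      (Unitary.star_mem hF)
  · simp_rw [star_eq_conjTranspose, mul_diagonal_mul_conjTranspose, sum_kronecker, kronecker_sum,
      smul_kronecker, kronecker_smul]
    exact Finset.sum_comm

end BlockDiagonal

theorem stmt14_general (k : ℕ)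
    (U : Matrix (Fin 2 × Fin k) (Fin 2 × Fin k) ℂ)
    (U1 U2 : Matrix (Fin k) (Fin k) ℂ) (hU1 : IsUnitary U1) (hU2 : IsUnitary U2)
    (e f : Fin 2 → Fin 2 → ℂ) (he : ONB e) (hf : ONB f)
    (hdecomp : U = vecMulVec (e 0) (star (f 0)) ⊗ₖ U1 +
        vecMulVec (e 1) (star (f 1)) ⊗ₖ U2) :
    memUA U := by
  rw [isUnitary_iff_mem_unitaryGroup] at hU1 hU2
  obtain ⟨G, hG, lam, hlam, hW⟩ :=
    exists_diagonalization_of_mem_unitaryGroup (mul_mem (Unitary.star_mem hU1) hU2)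
  have h1 : U1 = U1 * G * star G := by
    rw [mul_assoc, mem_unitaryGroup_iff.mp hG, mul_one]
  have h2 : U2 = U1 * G * diagonal lam * star G := by
    rw [mul_assoc U1, mul_assoc U1, ← hW, ← mul_assoc, mem_unitaryGroup_iff.mp hU1, one_mul]
  have hμ : ∀ j i, star (![1, lam] j i) * ![1, lam] j i = 1 := by
    intro j i
    fin_cases j
    · simp
    · exact hlam i
  simpa [Fin.sum_univ_two, ← h1, ← h2, ← hdecomp] using
    memUA_sum_vecMulVec_kronecker he hf (mul_mem hU1 hG) hG hμ

/-- for `n = 2`, every unitary of the form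
`e_1f_1* ⊗ U_1 + e_2f_2* ⊗ U_2` belongs to `𝒰^A_{block-diag}`;
in other words `𝒰^B_{block-diag} ⊆ 𝒰^A_{block-diag}` when `n = 2`. -/
theorem stmt14 (k : ℕ)
    (U : Matrix (Fin 2 × Fin k) (Fin 2 × Fin k) ℂ) (hU : IsUnitary U)
    (U1 U2 : Matrix (Fin k) (Fin k) ℂ) (hU1 : IsUnitary U1) (hU2 : IsUnitary U2)
    (e f : Fin 2 → Fin 2 → ℂ) (he : ONB e) (hf : ONB f)
    (hdecomp : U = vecMulVec (e 0) (star (f 0)) ⊗ₖ U1 +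
        vecMulVec (e 1) (star (f 1)) ⊗ₖ U2) :
    memUA U :=
  stmt14_general k U U1 U2 hU1 hU2 e f he hf hdecomp

end BipartiteUnitary
end
end

section
/- Let X ∈ M_{nk}(ℂ) be a circulant matrix: X_{ij} = x_{(j−i) mod nk} for some vector x ∈ ℂ^{nk}, with indices 0 ≤ i, j < nk. Under the identification of M_{nk}(ℂ) with M_n(ℂ) ⊗ M_k(ℂ) given by mapping the index pair (i, s) with 0 ≤ i < n, 0 ≤ s < k to i·k + s, the matrix X belongs to M^B_block-diag, i.e. X = Σ_{i=1}^n e_if_i* ⊗ X_i for some X_i ∈ M_k(ℂ) and orthonormal bases {e_i}, {f_i} of ℂ^n. In particular, every circulant unitary matrix of size nk belongs to U^B_block-diag. -/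
open Matrix Kronecker ComplexOrder

noncomputable section

namespace BipartiteUnitary

/-! Grouping the indices as `(i, s) ↦ i * k + s`, a circulant matrix is block circulant: its
`(i, j)` block depends only on `j - i` in `Fin n ≅ ℤ/n`. Block circulant matrices are
block-diagonalised by the discrete Fourier basis `e_m(a) = ψ(a m) / √n` for a primitive additive
character `ψ`, and orthogonality of characters gives both the orthonormality of the `e_m` and the
decomposition `X = ∑ m, e_m e_m* ⊗ X_m`. Sums of this shape over a fixed orthonormal basis
multiply and take adjoints blockwise, and each block is recovered by the partial trace of
`(e_l e_l* ⊗ 1) X`; so `X` unitary forces every `X_m` to be unitary. -/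

theorem _root_.AddChar.IsPrimitive.compAddMonoidHom_ringEquiv {R S : Type*} [CommRing R]
    [CommRing S] {ψ : AddChar S ℂ} (hψ : ψ.IsPrimitive) (f : R ≃+* S) :
    (ψ.compAddMonoidHom f.toAddMonoidHom).IsPrimitive := by
  intro a ha hshift
  refine hψ (f.map_ne_zero_iff.2 ha) ?_
  ext y
  simpa [AddChar.mulShift_apply] using DFunLike.congr_fun hshift (f.symm y)

section BlockDiag

variable {ι κ : Type*} [Fintype ι]

def blockDiagIn (e : ι → ι → ℂ) (A : ι → Matrix κ κ ℂ) : Matrix (ι × κ) (ι × κ) ℂ :=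
  ∑ m, vecMulVec (e m) (star (e m)) ⊗ₖ A m

theorem conjTranspose_blockDiagIn (e : ι → ι → ℂ) (A : ι → Matrix κ κ ℂ) :
    (blockDiagIn e A)ᴴ = blockDiagIn e fun m => (A m)ᴴ := by
  simp only [blockDiagIn, conjTranspose_sum, conjTranspose_kronecker, conjTranspose_vecMulVec,
    star_star]

namespace ONB

variable [DecidableEq ι] {e : ι → ι → ℂ}

theorem sum_vecMulVec_eq_one (he : ONB e) : ∑ m, vecMulVec (e m) (star (e m)) = 1 := by
  set E : Matrix ι ι ℂ := Matrix.of e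
  have hE : E.map star * Eᵀ = 1 := by
    ext i j
    simpa [E, Matrix.mul_apply, Matrix.one_apply] using he i j
  have hE' : Eᵀ * E.map star = 1 := mul_eq_one_comm.mp hE
  ext a b
  simpa [E, Matrix.mul_apply, Matrix.sum_apply, vecMulVec_apply] using congr_fun₂ hE' a b

theorem blockDiagIn_one [DecidableEq κ] (he : ONB e) :
    blockDiagIn e (1 : ι → Matrix κ κ ℂ) = 1 := by
  ext ⟨a, s⟩ ⟨b, t⟩
  have hsum := congr_fun₂ he.sum_vecMulVec_eq_one a b
  rw [Matrix.sum_apply] at hsum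
  simp only [blockDiagIn, Matrix.sum_apply, Pi.one_apply, kroneckerMap_apply, ← Finset.sum_mul,
    hsum, Matrix.one_apply, Prod.mk.injEq]
  split_ifs <;> simp_all

theorem trA_vecMulVec_kronecker (he : ONB e) (l : ι) (A : Matrix κ κ ℂ) :
    trA (vecMulVec (e l) (star (e l)) ⊗ₖ A) = A := by
  ext s t
  have hl : ∑ s, star (e l s) * e l s = 1 := by simpa using he l l
  simp only [trA, kroneckerMap_apply, vecMulVec_apply, Pi.star_apply, ← Finset.sum_mul]
  simp_rw [mul_comm (e l _), hl, one_mul]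

variable [Fintype κ]

theorem vecMulVec_kronecker_mul_vecMulVec_kronecker (he : ONB e) (m l : ι)
    (A B : Matrix κ κ ℂ) :
    (vecMulVec (e m) (star (e m)) ⊗ₖ A) * (vecMulVec (e l) (star (e l)) ⊗ₖ B) =
      if m = l then vecMulVec (e m) (star (e m)) ⊗ₖ (A * B) else 0 := by
  rw [← mul_kronecker_mul, Matrix.vecMulVec_mul_vecMulVec, dotProduct]
  simp only [Pi.star_apply, he m l]
  split_ifs with h
  · rw [h, one_smul]
  · rw [zero_smul, vecMulVec_zero, zero_kronecker]

theorem blockDiagIn_mul (he : ONB e) (A B : ι → Matrix κ κ ℂ) :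
    blockDiagIn e A * blockDiagIn e B = blockDiagIn e (A * B) := by
  simp_rw [blockDiagIn, Finset.sum_mul_sum, he.vecMulVec_kronecker_mul_vecMulVec_kronecker,
    Finset.sum_ite_eq, Finset.mem_univ, if_true, Pi.mul_apply]

variable [DecidableEq κ]

theorem vecMulVec_kronecker_one_mul_blockDiagIn (he : ONB e) (l : ι) (A : ι → Matrix κ κ ℂ) :
    (vecMulVec (e l) (star (e l)) ⊗ₖ (1 : Matrix κ κ ℂ)) * blockDiagIn e A =
      vecMulVec (e l) (star (e l)) ⊗ₖ A l := by
  simp_rw [blockDiagIn, Finset.mul_sum, he.vecMulVec_kronecker_mul_vecMulVec_kronecker, one_mul,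
    Finset.sum_ite_eq, Finset.mem_univ, if_true]

theorem blockDiagIn_injective (he : ONB e) :
    Function.Injective (blockDiagIn e : (ι → Matrix κ κ ℂ) → Matrix (ι × κ) (ι × κ) ℂ) := by
  intro A B h
  funext l
  rw [← he.trA_vecMulVec_kronecker l (A l), ← he.trA_vecMulVec_kronecker l (B l),
    ← vecMulVec_kronecker_one_mul_blockDiagIn he, ← vecMulVec_kronecker_one_mul_blockDiagIn he, h]

theorem isUnitary_of_isUnitary_blockDiagIn (he : ONB e) {A : ι → Matrix κ κ ℂ}
    (hU : IsUnitary (blockDiagIn e A)) (m : ι) : IsUnitary (A m) := by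
  have hmul : blockDiagIn e (A * fun m => (A m)ᴴ) = blockDiagIn e 1 := by
    rw [← he.blockDiagIn_mul, ← conjTranspose_blockDiagIn, hU.1, he.blockDiagIn_one]
  have hmul' : blockDiagIn e ((fun m => (A m)ᴴ) * A) = blockDiagIn e 1 := by
    rw [← he.blockDiagIn_mul, ← conjTranspose_blockDiagIn, hU.2, he.blockDiagIn_one]
  exact ⟨congr_fun (he.blockDiagIn_injective hmul) m, congr_fun (he.blockDiagIn_injective hmul') m⟩

end ONB

end BlockDiag

section Fourier

variable {R : Type*} [CommRing R] [Fintype R]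

def fourierVec (ψ : AddChar R ℂ) (m a : R) : ℂ :=
  ψ (a * m) / (Real.sqrt (Fintype.card R) : ℂ)

theorem fourierVec_mul_star_fourierVec (ψ : AddChar R ℂ) (m a m' b : R) :
    fourierVec ψ m a * star (fourierVec ψ m' b) = ψ (a * m - b * m') / Fintype.card R := by
  have hsqrt : (Real.sqrt (Fintype.card R) : ℂ) * Real.sqrt (Fintype.card R) = Fintype.card R := by
    rw [← Complex.ofReal_mul, Real.mul_self_sqrt (Nat.cast_nonneg _), Complex.ofReal_natCast]
  rw [fourierVec, fourierVec, star_div₀, Complex.star_def, Complex.conj_ofReal,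
    ← AddChar.map_neg_eq_conj, div_mul_div_comm, hsqrt, ← AddChar.map_add_eq_mul, sub_eq_add_neg]

variable [DecidableEq R]

theorem onb_fourierVec {ψ : AddChar R ℂ} (hψ : ψ.IsPrimitive) : ONB (fourierVec ψ) := by
  intro m m'
  simp_rw [mul_comm (star _), fourierVec_mul_star_fourierVec, ← mul_sub, ← Finset.sum_div,
    AddChar.sum_mulShift _ hψ, sub_eq_zero, eq_comm (a := m')]
  split_ifs <;> simp

theorem eq_blockDiagIn_fourierVec_of_circulant {κ : Type*} {ψ : AddChar R ℂ}
    (hψ : ψ.IsPrimitive) (C : R → Matrix κ κ ℂ) (X : Matrix (R × κ) (R × κ) ℂ)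
    (hX : ∀ i s j t, X (i, s) (j, t) = C (j - i) s t) :
    X = blockDiagIn (fourierVec ψ) fun m => ∑ d, ψ (d * m) • C d := by
  ext ⟨i, s⟩ ⟨j, t⟩
  have hcard : (Fintype.card R : ℂ) ≠ 0 := Nat.cast_ne_zero.2 Fintype.card_ne_zero
  have hterm : ∀ m d, ψ (i * m - j * m) / Fintype.card R * (ψ (d * m) * C d s t) =
      ψ (m * (i - j + d)) * (C d s t / Fintype.card R) := by
    intro m d
    rw [mul_comm m, add_mul, AddChar.map_add_eq_mul, sub_mul]
    ring
  simp only [blockDiagIn, Matrix.sum_apply, kroneckerMap_apply, vecMulVec_apply, Pi.star_apply,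
    fourierVec_mul_star_fourierVec, Matrix.smul_apply, smul_eq_mul, Finset.mul_sum, hterm]
  rw [Finset.sum_comm]
  simp_rw [← Finset.sum_mul, AddChar.sum_mulShift _ hψ, Nat.cast_ite, Nat.cast_zero, ite_mul,
    zero_mul, add_eq_zero_iff_eq_neg', neg_sub, Finset.sum_ite_eq', Finset.mem_univ, if_true,
    mul_div_cancel₀ _ hcard, hX]

end Fourier

theorem _root_.Fin.natCast_val_sub_mul {n : ℕ} [NeZero n] (i j : Fin n) (k : ℕ) :
    (((j - i : Fin n) : ℕ) * k : ZMod (n * k)) = (j : ℕ) * k - (i : ℕ) * k := by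
  have h : ((j - i + i : Fin n) : ℕ) = j := by rw [sub_add_cancel]
  rw [Fin.val_add] at h
  rw [eq_sub_iff_add_eq, ← h]
  norm_cast
  rw [← Nat.mul_mod_mul_right, ZMod.natCast_mod, add_mul]

open Fin.CommRing in
theorem exists_onb_eq_blockDiagIn_of_circulant (n k : ℕ) (x : ZMod (n * k) → ℂ)
    (X : Matrix (Fin n × Fin k) (Fin n × Fin k) ℂ)
    (hX : ∀ (i : Fin n) (s : Fin k) (j : Fin n) (t : Fin k),
      X (i, s) (j, t) =
        x (((j.val * k + t.val : ℕ) : ZMod (n * k)) -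
           ((i.val * k + s.val : ℕ) : ZMod (n * k)))) :
    ∃ e : Fin n → Fin n → ℂ, ONB e ∧ ∃ A, X = blockDiagIn e A := by
  rcases Nat.eq_zero_or_pos n with rfl | hn
  · exact ⟨0, fun i => i.elim0, 0, Subsingleton.elim _ _⟩
  have : NeZero n := ⟨hn.ne'⟩
  have hψ :=
    (ZMod.isPrimitive_stdAddChar n).compAddMonoidHom_ringEquiv (R := Fin n) (ZMod.finEquiv n)
  refine ⟨fourierVec _, onb_fourierVec hψ, _, eq_blockDiagIn_fourierVec_of_circulant hψ
    (fun d => Matrix.of fun (s t : Fin k) => x (((d : ℕ) * k + t : ℕ) - (s : ℕ))) X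
    fun i s j t => ?_⟩
  rw [hX, Matrix.of_apply]
  congr 1
  push_cast
  rw [Fin.natCast_val_sub_mul]
  ring

/-- every circulant matrix of size `nk` belongs to
`ℳ^B_{block-diag}`; in particular every circulant unitary belongs to
`𝒰^B_{block-diag}`. -/
theorem stmt15 (n k : ℕ) (x : ZMod (n * k) → ℂ)
    (X : Matrix (Fin n × Fin k) (Fin n × Fin k) ℂ)
    (hX : ∀ (i : Fin n) (s : Fin k) (j : Fin n) (t : Fin k),
      X (i, s) (j, t) =
        x (((j.val * k + t.val : ℕ) : ZMod (n * k)) -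
           ((i.val * k + s.val : ℕ) : ZMod (n * k)))) :
    memMB X ∧ (IsUnitary X → memUB X) := by
  obtain ⟨e, he, A, rfl⟩ := exists_onb_eq_blockDiagIn_of_circulant n k x X hX
  exact ⟨⟨A, e, e, he, he, rfl⟩,
    fun hU => ⟨A, e, e, he.isUnitary_of_isUnitary_blockDiagIn hU, he, he, rfl⟩⟩

end BipartiteUnitary
end
end
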